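/- arXiv:2102.13505 — 5 statements merged into one kernel-verified Lean document; each statement's English description precedes it below -/
import Mathlib

section
/- (Generalized discrete Gronwall lemma.) Let λ be a nonnegative Borel measure on [0,∞) such that K(t) := ∫_{[0,∞)} e^{−ρt} λ(dρ) < ∞ for every t > 0, and suppose ∫₀ᵀ K(t)^p dt < ∞ for some T > 0 and p > 0. Let C₂ > 0. Then there exists a constant M ∈ (0,∞), depending only on C₂, p, T and the kernel K, such that: for every C₁ > 0, every N ∈ ℕ*, and every finite sequence (u_k)_{0 ≤ k ≤ N} of nonnegative reals with u_0 = 0 and u_{k+1} ≤ C₁ + C₂·(T/N)·∑_{j=0}^{k} K((k+1−j)·T/N)^p · u_j for all k ∈ {0, …, N−1}, one has max_{0 ≤ k ≤ N} u_k ≤ C₁·M. -/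
open MeasureTheory
open scoped ENNReal

noncomputable def myKE (μ : Measure ℝ) (t : ℝ) : ℝ≥0∞ :=
  ∫⁻ ρ in Set.Ici (0 : ℝ), ENNReal.ofReal (Real.exp (-ρ * t)) ∂μ

noncomputable def myfE (μ : Measure ℝ) (p t : ℝ) : ℝ≥0∞ := myKE μ t ^ p

lemma myKE_anti (μ : Measure ℝ) {s t : ℝ} (hs : 0 ≤ s) (hst : s ≤ t) :
    myKE μ t ≤ myKE μ s := by
  refine setLIntegral_mono' measurableSet_Ici fun ρ hρ => ?_
  have hρ0 : (0:ℝ) ≤ ρ := hρ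
  exact ENNReal.ofReal_le_ofReal (Real.exp_le_exp.mpr (by nlinarith))

lemma myfE_anti (μ : Measure ℝ) {p s t : ℝ} (hp : 0 ≤ p) (hs : 0 ≤ s) (hst : s ≤ t) :
    myfE μ p t ≤ myfE μ p s :=
  ENNReal.rpow_le_rpow (myKE_anti μ hs hst) hp

lemma my_step (μ : Measure ℝ) {p h : ℝ} (hh : 0 < h) (hp : 0 ≤ p) (i : ℕ) :
    ENNReal.ofReal h * myfE μ p (((i:ℝ)+1)*h) ≤
      ∫⁻ t in Set.Ioc ((i:ℝ)*h) (((i:ℝ)+1)*h), myfE μ p t := by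
  have h1 : (∫⁻ _t in Set.Ioc ((i:ℝ)*h) (((i:ℝ)+1)*h), myfE μ p (((i:ℝ)+1)*h)) =
      myfE μ p (((i:ℝ)+1)*h) * ENNReal.ofReal h := by
    rw [setLIntegral_const, Real.volume_Ioc]
    congr 2
    ring
  rw [mul_comm, ← h1]
  refine setLIntegral_mono' measurableSet_Ioc fun t ht => ?_
  have h0t : (0:ℝ) ≤ t := le_of_lt (lt_of_le_of_lt (by positivity) ht.1)
  exact myfE_anti μ hp h0t ht.2

lemma my_small (μ : Measure ℝ) {p h δ : ℝ} (hh : 0 < h) (hp : 0 ≤ p) (k : ℕ)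
    (ε : ℝ≥0∞) (hδ : (∫⁻ t in Set.Ioc (0:ℝ) δ, myfE μ p t) ≤ ε) :
    ∑ j ∈ (Finset.range (k+1)).filter (fun j : ℕ => ((k:ℝ)+1-(j:ℝ))*h ≤ δ),
      ENNReal.ofReal h * myfE μ p (((k:ℝ)+1-(j:ℝ))*h) ≤ ε := by
  classical
  set A := (Finset.range (k+1)).filter (fun j : ℕ => ((k:ℝ)+1-(j:ℝ))*h ≤ δ) with hA
  have hdisj : ∀ a b : ℕ, a < b →
      Disjoint (Set.Ioc (((k:ℝ)-a)*h) (((k:ℝ)+1-a)*h))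
        (Set.Ioc (((k:ℝ)-b)*h) (((k:ℝ)+1-b)*h)) := by
    intro a b hab
    have hab' : (a:ℝ) + 1 ≤ b := by exact_mod_cast hab
    have hle : ((k:ℝ)+1-b) * h ≤ ((k:ℝ)-a)*h := by nlinarith
    exact Set.Ioc_disjoint_Ioc.mpr
      (le_trans (min_le_right _ _) (le_trans hle (le_max_left _ _)))
  calc ∑ j ∈ A, ENNReal.ofReal h * myfE μ p (((k:ℝ)+1-(j:ℝ))*h)
      ≤ ∑ j ∈ A, ∫⁻ t in Set.Ioc (((k:ℝ)-(j:ℝ))*h) (((k:ℝ)+1-(j:ℝ))*h), myfE μ p t := by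
        refine Finset.sum_le_sum fun j hj => ?_
        have hjk : j ≤ k := Nat.lt_succ_iff.mp (Finset.mem_range.mp (Finset.mem_filter.mp hj).1)
        have e1 : ((k:ℝ) - (j:ℝ)) = ((k - j : ℕ) : ℝ) := by
          rw [Nat.cast_sub hjk]
        have e2 : ((k:ℝ) + 1 - (j:ℝ)) = ((k - j : ℕ) : ℝ) + 1 := by
          rw [Nat.cast_sub hjk]; ring
        rw [e1, e2]
        exact my_step μ hh hp (k - j)
    _ = ∫⁻ t in ⋃ j ∈ A, Set.Ioc (((k:ℝ)-(j:ℝ))*h) (((k:ℝ)+1-(j:ℝ))*h), myfE μ p t := by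
        refine (lintegral_biUnion_finset ?_ (fun _ _ => measurableSet_Ioc) _).symm
        intro a ha b hb hab
        rcases lt_or_gt_of_ne hab with h' | h'
        · exact hdisj a b h'
        · exact (hdisj b a h').symm
    _ ≤ ∫⁻ t in Set.Ioc (0:ℝ) δ, myfE μ p t := by
        refine lintegral_mono_set (Set.iUnion₂_subset fun j hj => ?_)
        obtain ⟨hj1, hj2⟩ := Finset.mem_filter.mp hj
        have hjk : (j:ℝ) ≤ k := by
          exact_mod_cast Nat.lt_succ_iff.mp (Finset.mem_range.mp hj1)
        intro t ht
        exact ⟨lt_of_le_of_lt (by nlinarith) ht.1, le_trans ht.2 hj2⟩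
    _ ≤ ε := hδ


/-- Generalized discrete Gronwall lemma. Let `μ` be a nonnegative Borel measure on
`[0,∞)` with completely monotone kernel `K(t) = ∫_{[0,∞)} e^{-ρt} μ(dρ)` finite for
every `t > 0`, and suppose `∫₀ᵀ K(t)^p dt < ∞` for some `T > 0`, `p > 0`. Let `C₂ > 0`.
Then there is `M > 0`, depending only on `C₂, p, T` and the kernel, such that for every
`C₁ > 0`, every `N ∈ ℕ*`, and every nonnegative finite sequence `(u_k)_{0 ≤ k ≤ N}`
with `u_0 = 0` and
`u_{k+1} ≤ C₁ + C₂ (T/N) ∑_{j=0}^{k} K((k+1-j)T/N)^p u_j` for `k < N`,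
one has `max_{0 ≤ k ≤ N} u_k ≤ C₁ M`. -/
theorem stmt_7 (μ : Measure ℝ) (T p C₂ : ℝ) (hT : 0 < T) (hp : 0 < p) (hC₂ : 0 < C₂)
    (hfin : ∀ t : ℝ, 0 < t →
      (∫⁻ ρ in Set.Ici (0 : ℝ), ENNReal.ofReal (Real.exp (-ρ * t)) ∂μ) < ⊤)
    (hint : (∫⁻ t in Set.Ioc (0 : ℝ) T,
        (∫⁻ ρ in Set.Ici (0 : ℝ), ENNReal.ofReal (Real.exp (-ρ * t)) ∂μ) ^ (p : ℝ)) < ⊤) :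
    ∃ M : ℝ, 0 < M ∧ ∀ C₁ : ℝ, 0 < C₁ → ∀ N : ℕ, 0 < N → ∀ u : ℕ → ℝ,
      (∀ k, k ≤ N → 0 ≤ u k) → u 0 = 0 →
      (∀ k, k < N → u (k + 1) ≤ C₁ + C₂ * (T / N) *
          ∑ j ∈ Finset.range (k + 1),
            ((∫⁻ ρ in Set.Ici (0 : ℝ),
                ENNReal.ofReal (Real.exp (-ρ * (((k : ℝ) + 1 - (j : ℝ)) * T / N))) ∂μ).toReal)
              ^ p * u j) →
      ∀ k, k ≤ N → u k ≤ C₁ * M := by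
  classical
  have hfin' : ∀ t : ℝ, 0 < t → myfE μ p t ≠ ⊤ := fun t ht =>
    ENNReal.rpow_ne_top_of_nonneg hp.le (hfin t ht).ne
  have hint' : (∫⁻ t, myfE μ p t ∂(volume.restrict (Set.Ioc (0:ℝ) T))) ≠ ⊤ := hint.ne
  -- choose δ
  obtain ⟨δ, hδ0, hδT, hδ⟩ :
      ∃ δ : ℝ, 0 < δ ∧ δ ≤ T ∧
        (∫⁻ t in Set.Ioc (0:ℝ) δ, myfE μ p t) ≤ ENNReal.ofReal (1 / (2 * C₂)) := by
    have hεpos : (0:ℝ≥0∞) < ENNReal.ofReal (1 / (2 * C₂)) := by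
      rw [ENNReal.ofReal_pos]; positivity
    have hμt : Filter.Tendsto
        (fun n : ℕ => (volume.restrict (Set.Ioc (0:ℝ) T)) (Set.Ioc (0:ℝ) (T / n)))
        Filter.atTop (nhds 0) := by
      have hup : Filter.Tendsto (fun n : ℕ => ENNReal.ofReal (T / n)) Filter.atTop (nhds 0) := by
        have := ENNReal.tendsto_ofReal (tendsto_const_div_atTop_nhds_zero_nat T)
        simpa using this
      refine tendsto_of_tendsto_of_tendsto_of_le_of_le tendsto_const_nhds hup
        (fun n => zero_le) (fun n => ?_)
      calc (volume.restrict (Set.Ioc (0:ℝ) T)) (Set.Ioc (0:ℝ) (T / n))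
          ≤ volume (Set.Ioc (0:ℝ) (T / n)) := Measure.restrict_apply_le _ _
        _ = ENNReal.ofReal (T / n) := by rw [Real.volume_Ioc, sub_zero]
    have htend := tendsto_setLIntegral_zero hint' hμt
    have hev := (htend.eventually_lt_const hεpos).and (Filter.eventually_ge_atTop 1)
    obtain ⟨n, hn1, hn2⟩ := hev.exists
    have hn0 : (0:ℝ) < (n:ℝ) := by exact_mod_cast hn2
    refine ⟨T / n, by positivity, div_le_self hT.le (by exact_mod_cast hn2), ?_⟩
    have hrr : (∫⁻ t in Set.Ioc (0:ℝ) (T/n), myfE μ p t ∂(volume.restrict (Set.Ioc (0:ℝ) T)))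
        = ∫⁻ t in Set.Ioc (0:ℝ) (T/n), myfE μ p t := by
      rw [Measure.restrict_restrict measurableSet_Ioc,
        Set.inter_eq_self_of_subset_left
          (Set.Ioc_subset_Ioc_right (div_le_self hT.le (by exact_mod_cast hn2)))]
    rw [hrr] at hn1
    exact hn1.le
  set B0 : ℝ := (myfE μ p δ).toReal with hB0def
  have hB0 : 0 ≤ B0 := ENNReal.toReal_nonneg
  refine ⟨2 * Real.exp (2 * C₂ * B0 * T), by positivity, ?_⟩
  intro C₁ hC₁ N hN u hu hu0 hrec
  have hN0 : (0:ℝ) < (N:ℝ) := by exact_mod_cast hN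
  have hh : 0 < T / N := div_pos hT hN0
  set q : ℝ := 2 * C₂ * B0 * (T / N) with hq
  have hq0 : 0 ≤ q := by positivity
  -- real version of the small-sum bound
  have hsmallR : ∀ k : ℕ,
      (T/N) * ∑ j ∈ (Finset.range (k+1)).filter (fun j : ℕ => ((k:ℝ)+1-(j:ℝ))*(T/N) ≤ δ),
        (myfE μ p (((k:ℝ)+1-(j:ℝ))*(T/N))).toReal ≤ 1 / (2*C₂) := by
    intro k
    have hfinA : ∀ j ∈ (Finset.range (k+1)).filter (fun j : ℕ => ((k:ℝ)+1-(j:ℝ))*(T/N) ≤ δ),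
        ENNReal.ofReal (T/N) * myfE μ p (((k:ℝ)+1-(j:ℝ))*(T/N)) ≠ ⊤ := by
      intro j hj
      have hjk : (j:ℝ) ≤ k := by
        exact_mod_cast Nat.lt_succ_iff.mp (Finset.mem_range.mp (Finset.mem_filter.mp hj).1)
      exact ENNReal.mul_ne_top ENNReal.ofReal_ne_top (hfin' _ (by nlinarith))
    have h2 := ENNReal.toReal_mono ENNReal.ofReal_ne_top (my_small μ hh hp.le k _ hδ)
    rw [ENNReal.toReal_ofReal (by positivity), ENNReal.toReal_sum hfinA] at h2
    have h3 : ∑ j ∈ (Finset.range (k+1)).filter (fun j : ℕ => ((k:ℝ)+1-(j:ℝ))*(T/N) ≤ δ),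
        (ENNReal.ofReal (T/N) * myfE μ p (((k:ℝ)+1-(j:ℝ))*(T/N))).toReal
        = ∑ j ∈ (Finset.range (k+1)).filter (fun j : ℕ => ((k:ℝ)+1-(j:ℝ))*(T/N) ≤ δ),
          (T/N) * (myfE μ p (((k:ℝ)+1-(j:ℝ))*(T/N))).toReal := by
      refine Finset.sum_congr rfl fun j hj => ?_
      rw [ENNReal.toReal_mul, ENNReal.toReal_ofReal hh.le]
    rw [h3, ← Finset.mul_sum] at h2
    exact h2
  -- key induction
  have key : ∀ k, k ≤ N → u k ≤ 2 * C₁ * (1 + q) ^ k := by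
    intro k
    induction k using Nat.strong_induction_on with
    | _ k ih =>
      cases k with
      | zero => intro _; rw [hu0]; positivity
      | succ k =>
        intro hk1
        have hkN : k < N := Nat.lt_of_succ_le hk1
        have hub : ∀ j, j ≤ k → u j ≤ 2 * C₁ * (1 + q) ^ k := by
          intro j hj
          refine le_trans (ih j (Nat.lt_succ_of_le hj) (le_trans hj hkN.le)) ?_
          have hpw : (1+q)^j ≤ (1+q)^k := pow_le_pow_right₀ (by linarith) hj
          nlinarith
        have hr : u (k+1) ≤ C₁ + C₂ * (T/N) *
            ∑ j ∈ Finset.range (k+1), (myfE μ p (((k:ℝ)+1-(j:ℝ))*(T/N))).toReal * u j := by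
          have h0 := hrec k hkN
          simp only [mul_div_assoc, ENNReal.toReal_rpow] at h0
          exact h0
        set P : ℕ → Prop := fun j : ℕ => ((k:ℝ)+1-(j:ℝ))*(T/N) ≤ δ with hP
        have hsplit := Finset.sum_filter_add_sum_filter_not (Finset.range (k+1)) P
          (fun j => (myfE μ p (((k:ℝ)+1-(j:ℝ))*(T/N))).toReal * u j)
        have hbA : ∑ j ∈ (Finset.range (k+1)).filter P,
              (myfE μ p (((k:ℝ)+1-(j:ℝ))*(T/N))).toReal * u j
            ≤ (∑ j ∈ (Finset.range (k+1)).filter P,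
                (myfE μ p (((k:ℝ)+1-(j:ℝ))*(T/N))).toReal) * (2 * C₁ * (1+q)^k) := by
          rw [Finset.sum_mul]
          refine Finset.sum_le_sum fun j hj => ?_
          have hjk : j ≤ k := Nat.lt_succ_iff.mp (Finset.mem_range.mp (Finset.mem_filter.mp hj).1)
          exact mul_le_mul_of_nonneg_left (hub j hjk) ENNReal.toReal_nonneg
        have hbB : ∑ j ∈ (Finset.range (k+1)).filter (fun j => ¬ P j),
              (myfE μ p (((k:ℝ)+1-(j:ℝ))*(T/N))).toReal * u j
            ≤ B0 * ∑ j ∈ Finset.range (k+1), u j := by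
          calc ∑ j ∈ (Finset.range (k+1)).filter (fun j => ¬ P j),
                (myfE μ p (((k:ℝ)+1-(j:ℝ))*(T/N))).toReal * u j
              ≤ ∑ j ∈ (Finset.range (k+1)).filter (fun j => ¬ P j), B0 * u j := by
                refine Finset.sum_le_sum fun j hj => ?_
                obtain ⟨hj1, hj2⟩ := Finset.mem_filter.mp hj
                have hjk : j ≤ k := Nat.lt_succ_iff.mp (Finset.mem_range.mp hj1)
                have harg : δ ≤ ((k:ℝ)+1-(j:ℝ))*(T/N) := le_of_not_ge hj2
                have hmono : (myfE μ p (((k:ℝ)+1-(j:ℝ))*(T/N))).toReal ≤ B0 :=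
                  ENNReal.toReal_mono (hfin' δ hδ0) (myfE_anti μ hp.le hδ0.le harg)
                exact mul_le_mul_of_nonneg_right hmono (hu j (le_trans hjk hkN.le))
            _ ≤ ∑ j ∈ Finset.range (k+1), B0 * u j := by
                refine Finset.sum_le_sum_of_subset_of_nonneg (Finset.filter_subset _ _)
                  fun j hj _ => mul_nonneg hB0
                    (hu j (le_trans (Nat.lt_succ_iff.mp (Finset.mem_range.mp hj)) hkN.le))
            _ = B0 * ∑ j ∈ Finset.range (k+1), u j := (Finset.mul_sum _ _ _).symm
        have hsU : ∑ j ∈ Finset.range (k+1), u j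
            ≤ 2 * C₁ * ∑ j ∈ Finset.range (k+1), (1+q)^j := by
          rw [Finset.mul_sum]
          refine Finset.sum_le_sum fun j hj => ?_
          exact ih j (Finset.mem_range.mp hj) (le_trans (Nat.lt_succ_iff.mp (Finset.mem_range.mp hj)) hkN.le)
        have hgeom : (∑ j ∈ Finset.range (k+1), (1+q)^j) * q = (1+q)^(k+1) - 1 := by
          have := geom_sum_mul (1+q) (k+1)
          rw [add_sub_cancel_left] at this
          exact this
        have hG0 : 0 ≤ ∑ j ∈ Finset.range (k+1), (1+q)^j :=
          Finset.sum_nonneg fun j _ => by positivity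
        have hW0 : 0 ≤ ∑ j ∈ (Finset.range (k+1)).filter P,
            (myfE μ p (((k:ℝ)+1-(j:ℝ))*(T/N))).toReal :=
          Finset.sum_nonneg fun j _ => ENNReal.toReal_nonneg
        have eA : C₂ * (T/N) * (∑ j ∈ (Finset.range (k+1)).filter P,
              (myfE μ p (((k:ℝ)+1-(j:ℝ))*(T/N))).toReal * u j)
            ≤ C₁ * (1+q)^k := by
          have e1 : C₂ * (T/N) * (∑ j ∈ (Finset.range (k+1)).filter P,
                (myfE μ p (((k:ℝ)+1-(j:ℝ))*(T/N))).toReal * u j)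
              ≤ C₂ * (T/N) * ((∑ j ∈ (Finset.range (k+1)).filter P,
                (myfE μ p (((k:ℝ)+1-(j:ℝ))*(T/N))).toReal) * (2 * C₁ * (1+q)^k)) :=
            mul_le_mul_of_nonneg_left hbA (by positivity)
          have e2 : C₂ * (T/N) * ((∑ j ∈ (Finset.range (k+1)).filter P,
                (myfE μ p (((k:ℝ)+1-(j:ℝ))*(T/N))).toReal) * (2 * C₁ * (1+q)^k))
              = C₂ * ((T/N) * ∑ j ∈ (Finset.range (k+1)).filter P,
                (myfE μ p (((k:ℝ)+1-(j:ℝ))*(T/N))).toReal) * (2 * C₁ * (1+q)^k) := by ring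
          have e3 : C₂ * ((T/N) * ∑ j ∈ (Finset.range (k+1)).filter P,
                (myfE μ p (((k:ℝ)+1-(j:ℝ))*(T/N))).toReal) * (2 * C₁ * (1+q)^k)
              ≤ C₂ * (1/(2*C₂)) * (2 * C₁ * (1+q)^k) :=
            mul_le_mul_of_nonneg_right
              (mul_le_mul_of_nonneg_left (hsmallR k) hC₂.le) (by positivity)
          have e4 : C₂ * (1/(2*C₂)) * (2 * C₁ * (1+q)^k) = C₁ * (1+q)^k := by
            field_simp
          linarith
        have eB : C₂ * (T/N) * (∑ j ∈ (Finset.range (k+1)).filter (fun j => ¬ P j),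
              (myfE μ p (((k:ℝ)+1-(j:ℝ))*(T/N))).toReal * u j)
            ≤ C₁ * ((1+q)^(k+1) - 1) := by
          have f1 : C₂ * (T/N) * (∑ j ∈ (Finset.range (k+1)).filter (fun j => ¬ P j),
                (myfE μ p (((k:ℝ)+1-(j:ℝ))*(T/N))).toReal * u j)
              ≤ C₂ * (T/N) * (B0 * (2 * C₁ * ∑ j ∈ Finset.range (k+1), (1+q)^j)) :=
            mul_le_mul_of_nonneg_left
              (le_trans hbB (mul_le_mul_of_nonneg_left hsU hB0)) (by positivity)
          have f2 : C₂ * (T/N) * (B0 * (2 * C₁ * ∑ j ∈ Finset.range (k+1), (1+q)^j))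
              = C₁ * ((∑ j ∈ Finset.range (k+1), (1+q)^j) * q) := by
            rw [hq]; ring
          rw [f2, hgeom] at f1
          exact f1
        have hpw : (1+q)^k ≤ (1+q)^(k+1) := pow_le_pow_right₀ (by linarith) (Nat.le_succ k)
        have hCpw : C₁ * (1+q)^k ≤ C₁ * (1+q)^(k+1) :=
          mul_le_mul_of_nonneg_left hpw hC₁.le
        have hfinal : u (k+1) ≤ C₁ + C₂ * (T/N) *
            ((∑ j ∈ (Finset.range (k+1)).filter P,
              (myfE μ p (((k:ℝ)+1-(j:ℝ))*(T/N))).toReal * u j)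
            + (∑ j ∈ (Finset.range (k+1)).filter (fun j => ¬ P j),
              (myfE μ p (((k:ℝ)+1-(j:ℝ))*(T/N))).toReal * u j)) := by
          rw [hsplit]; exact hr
        nlinarith [hfinal, eA, eB]
  -- conclude
  intro k hkN
  have h1 := key k hkN
  have h2 : (1+q)^k ≤ (1+q)^N := pow_le_pow_right₀ (by linarith) hkN
  have h3 : (1+q)^N ≤ Real.exp q ^ N :=
    pow_le_pow_left₀ (by linarith) (by linarith [Real.add_one_le_exp q]) N
  have h4 : Real.exp q ^ N = Real.exp ((N:ℝ) * q) := (Real.exp_nat_mul q N).symm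
  have h5 : (N:ℝ) * q = 2 * C₂ * B0 * T := by
    rw [hq]; field_simp
  have h6 : (1+q)^N ≤ Real.exp (2 * C₂ * B0 * T) := by
    rw [← h5, ← h4]; exact h3
  calc u k ≤ 2 * C₁ * (1 + q) ^ k := h1
    _ ≤ 2 * C₁ * (1 + q) ^ N := by nlinarith
    _ ≤ 2 * C₁ * Real.exp (2 * C₂ * B0 * T) := by nlinarith
    _ = C₁ * (2 * Real.exp (2 * C₂ * B0 * T)) := by ring
end

section
/- (Coincidence of the Volterra Euler scheme and the multifactor Euler scheme, single-kernel case.) Let d, n, N ∈ ℕ*, T > 0, t_k := kT/N, let α₁, …, α_n ≥ 0, 0 ≤ ρ₁ < ⋯ < ρ_n, let A₁, …, A_n ∈ M_d(ℝ), and set G(t) := ∑_{i=1}^n α_i A_i e^{−ρ_i t}. Let b : ℝ^d → ℝ^d, σ : ℝ^d → M_d(ℝ) be arbitrary functions, x₀ ∈ ℝ^d, and let w₀, …, w_{N−1} ∈ ℝ^d be arbitrary vectors. Define the Volterra Euler scheme by X^N_{t_0} = x₀ and X^N_{t_{k+1}} = x₀ + ∑_{j=0}^{k} G((k+1−j)T/N)·b(X^N_{t_j})·(T/N)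 + ∑_{j=0}^{k} G((k+1−j)T/N)·σ(X^N_{t_j})·w_j. Define the multifactor Euler scheme by X̂^{i,N}_{t_0} = 0, X̂^N_{t_k} = x₀ + ∑_{i=1}^n α_i A_i X̂^{i,N}_{t_k}, and X̂^{i,N}_{t_{k+1}} = e^{−ρ_i T/N}·( X̂^{i,N}_{t_k} + b(X̂^N_{t_k})·(T/N) + σ(X̂^N_{t_k})·w_k ). Then X^N_{t_k} = X̂^N_{t_k} for all k ∈ {0, …, N}. -/
private lemma aux_sum_mulVec {d n : ℕ} (f : Fin n → Matrix (Fin d) (Fin d) ℝ)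
    (x : Fin d → ℝ) : (∑ i, f i).mulVec x = ∑ i, (f i).mulVec x := by
  induction (Finset.univ : Finset (Fin n)) using Finset.induction with
  | empty => simp
  | @insert a s h ih => simp [Finset.sum_insert h, Matrix.add_mulVec, ih]

private lemma aux_mulVec_sum {d : ℕ} (A : Matrix (Fin d) (Fin d) ℝ) (s : Finset ℕ)
    (f : ℕ → Fin d → ℝ) : A.mulVec (∑ j ∈ s, f j) = ∑ j ∈ s, A.mulVec (f j) := by
  exact map_sum A.mulVecLin f s

/-- Coincidence of the Volterra Euler scheme and the multifactor Euler scheme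
(single-kernel case). With `G(t) = ∑ᵢ αᵢ Aᵢ e^{-ρᵢ t}`, the Volterra Euler scheme
`X` (driven by arbitrary increments `w`) and the multifactor Euler scheme `X̂`
coincide at each grid point `t_k = kT/N` for `0 ≤ k ≤ N`. -/
theorem stmt_8 {d n N : ℕ} (hd : 0 < d) (hn : 0 < n) (hN : 0 < N)
    (T : ℝ) (hT : 0 < T)
    (α : Fin n → ℝ) (hα : ∀ i, 0 ≤ α i)
    (ρ : Fin n → ℝ) (hρnonneg : ∀ i, 0 ≤ ρ i) (hρmono : StrictMono ρ)
    (A : Fin n → Matrix (Fin d) (Fin d) ℝ)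
    (b : (Fin d → ℝ) → (Fin d → ℝ)) (σ : (Fin d → ℝ) → Matrix (Fin d) (Fin d) ℝ)
    (x₀ : Fin d → ℝ) (w : ℕ → (Fin d → ℝ))
    (G : ℝ → Matrix (Fin d) (Fin d) ℝ)
    (hG : ∀ t : ℝ, G t = ∑ i : Fin n, (α i * Real.exp (-(ρ i) * t)) • A i)
    -- the Volterra Euler scheme
    (X : ℕ → (Fin d → ℝ)) (hX0 : X 0 = x₀)
    (hX : ∀ k, k < N → X (k + 1) = x₀ +
        (∑ j ∈ Finset.range (k + 1),
          (T / N) • (G (((k : ℝ) + 1 - (j : ℝ)) * T / N)).mulVec (b (X j))) +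
        ∑ j ∈ Finset.range (k + 1),
          (G (((k : ℝ) + 1 - (j : ℝ)) * T / N)).mulVec ((σ (X j)).mulVec (w j)))
    -- the multifactor Euler scheme
    (Xi : Fin n → ℕ → (Fin d → ℝ)) (hXi0 : ∀ i, Xi i 0 = 0)
    (Xhat : ℕ → (Fin d → ℝ))
    (hXhat : ∀ k, Xhat k = x₀ + ∑ i : Fin n, α i • (A i).mulVec (Xi i k))
    (hXi : ∀ i k, k < N → Xi i (k + 1) =
        Real.exp (-(ρ i) * (T / N)) •
          (Xi i k + (T / N) • b (Xhat k) + (σ (Xhat k)).mulVec (w k))) :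
    ∀ k, k ≤ N → X k = Xhat k := by
  set v : ℕ → (Fin d → ℝ) := fun j => (T / N) • b (Xhat j) + (σ (Xhat j)).mulVec (w j) with hv
  -- closed form for the factors `Xi i k`
  have hXic : ∀ k, k ≤ N → ∀ i, Xi i k =
      ∑ j ∈ Finset.range k, Real.exp (-(ρ i) * (((k : ℝ) - (j : ℝ)) * T / N)) • v j := by
    intro k
    induction k with
    | zero => intro _ i; simp [hXi0]
    | succ k ih =>
      intro hk i
      have hk' : k < N := hk
      rw [hXi i k hk', ih (le_of_lt hk') i, Finset.sum_range_succ, add_assoc,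
        show (T / N) • b (Xhat k) + (σ (Xhat k)).mulVec (w k) = v k from rfl,
        smul_add, Finset.smul_sum]
      congr 1
      · refine Finset.sum_congr rfl fun j hj => ?_
        rw [smul_smul, ← Real.exp_add]
        congr 1
        push_cast
        ring
      · congr 1
        push_cast
        ring
  suffices h : ∀ k, k ≤ N → ∀ j, j ≤ k → X j = Xhat j by
    intro k hk; exact h k hk k le_rfl
  intro k
  induction k with
  | zero =>
    intro _ j hj
    interval_cases j
    rw [hX0, hXhat 0]
    simp [hXi0]
  | succ k ih =>
    intro hk j hj
    rcases Nat.lt_succ_iff_lt_or_eq.mp (Nat.lt_succ_of_le hj) with hj' | rfl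
    · exact ih (Nat.le_of_succ_le hk) j (Nat.lt_succ_iff.mp hj')
    · have hk' : k < N := hk
      have hXj : ∀ j ∈ Finset.range (k + 1), X j = Xhat j := fun j hj =>
        ih (Nat.le_of_succ_le hk) j (Nat.lt_succ_iff.mp (Finset.mem_range.mp hj))
      rw [hX k hk', hXhat (k + 1), add_assoc]
      congr 1
      have e1 : ∀ i : Fin n, α i • (A i).mulVec (Xi i (k + 1)) =
          ∑ j ∈ Finset.range (k + 1),
            (α i * Real.exp (-(ρ i) * (((k : ℝ) + 1 - (j : ℝ)) * T / N))) •
              (A i).mulVec (v j) := by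
        intro i
        rw [hXic (k + 1) hk i, aux_mulVec_sum, Finset.smul_sum]
        refine Finset.sum_congr rfl fun j hj => ?_
        rw [Matrix.mulVec_smul, smul_smul]
        congr 2
        push_cast
        ring
      calc
        (∑ j ∈ Finset.range (k + 1),
            (T / N) • (G (((k : ℝ) + 1 - (j : ℝ)) * T / N)).mulVec (b (X j))) +
          ∑ j ∈ Finset.range (k + 1),
            (G (((k : ℝ) + 1 - (j : ℝ)) * T / N)).mulVec ((σ (X j)).mulVec (w j))
            = ∑ j ∈ Finset.range (k + 1),
              (G (((k : ℝ) + 1 - (j : ℝ)) * T / N)).mulVec (v j) := by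
          rw [← Finset.sum_add_distrib]
          refine Finset.sum_congr rfl fun j hj => ?_
          rw [hXj j hj, hv, Matrix.mulVec_add, Matrix.mulVec_smul]
        _ = ∑ j ∈ Finset.range (k + 1), ∑ i : Fin n,
              (α i * Real.exp (-(ρ i) * (((k : ℝ) + 1 - (j : ℝ)) * T / N))) •
                (A i).mulVec (v j) := by
          refine Finset.sum_congr rfl fun j hj => ?_
          rw [hG, aux_sum_mulVec]
          exact Finset.sum_congr rfl fun i _ => Matrix.smul_mulVec _ _ _
        _ = ∑ i : Fin n, ∑ j ∈ Finset.range (k + 1),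
              (α i * Real.exp (-(ρ i) * (((k : ℝ) + 1 - (j : ℝ)) * T / N))) •
                (A i).mulVec (v j) := Finset.sum_comm
        _ = ∑ i : Fin n, α i • (A i).mulVec (Xi i (k + 1)) :=
          Finset.sum_congr rfl fun i _ => (e1 i).symm
end

section
/- (Coincidence of the Volterra Euler scheme and the multifactor Euler scheme, two-kernel case.) Let d, n, N ∈ ℕ*, T > 0, t_k := kT/N, let α₁, …, α_n ≥ 0, 0 ≤ ρ₁ < ⋯ < ρ_n, let B₁, …, B_n and C₁, …, C_n ∈ M_d(ℝ), and set G₁(t) := ∑_{i=1}^n α_i B_i e^{−ρ_i t} and G₂(t) := ∑_{i=1}^n α_i C_i e^{−ρ_i t}. Let b : ℝ^d → ℝ^d, σ : ℝ^d → M_d(ℝ) be arbitrary functions, x₀ ∈ ℝ^d, and let w₀, …, w_{N−1} ∈ ℝ^d be arbitrary vectors. Define the Volterra Euler scheme by X^N_{t_0} = x₀ and X^N_{t_{k+1}} = x₀ + ∑_{j=0}^{k} G₁((k+1−j)T/N)·b(X^N_{t_j})·(T/N) + ∑_{j=0}^{k} G₂((k+1−j)T/N)·σ(X^N_{t_j})·w_j.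 Define the multifactor scheme by X̂^{i,N}_{t_0} = Ŷ^{i,N}_{t_0} = 0, X̂^N_{t_k} = x₀ + ∑_{i=1}^n α_i B_i X̂^{i,N}_{t_k} + ∑_{i=1}^n α_i C_i Ŷ^{i,N}_{t_k}, X̂^{i,N}_{t_{k+1}} = e^{−ρ_i T/N}·( X̂^{i,N}_{t_k} + b(X̂^N_{t_k})·(T/N) ), and Ŷ^{i,N}_{t_{k+1}} = e^{−ρ_i T/N}·( Ŷ^{i,N}_{t_k} + σ(X̂^N_{t_k})·w_k ). Then X^N_{t_k} = X̂^N_{t_k} for all k ∈ {0, …, N}. -/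
lemma sum_mulVec' {d : ℕ} {ι : Type*} (s : Finset ι) (M : ι → Matrix (Fin d) (Fin d) ℝ)
    (v : Fin d → ℝ) : (∑ i ∈ s, M i).mulVec v = ∑ i ∈ s, (M i).mulVec v := by
  classical
  induction s using Finset.induction with
  | empty => simp [Matrix.mulVec_zero]
  | insert _ _ h ih => simp [Finset.sum_insert h, Matrix.add_mulVec, ih]

lemma mulVec_sum' {d : ℕ} {ι : Type*} (s : Finset ι) (M : Matrix (Fin d) (Fin d) ℝ)
    (v : ι → Fin d → ℝ) : M.mulVec (∑ i ∈ s, v i) = ∑ i ∈ s, M.mulVec (v i) := by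
  classical
  induction s using Finset.induction with
  | empty => simp
  | insert _ _ h ih => simp [Finset.sum_insert h, Matrix.mulVec_add, ih]

/-- Coincidence of the Volterra Euler scheme and the multifactor Euler scheme
(two-kernel case). With `G₁(t) = ∑ᵢ αᵢ Bᵢ e^{-ρᵢ t}` and `G₂(t) = ∑ᵢ αᵢ Cᵢ e^{-ρᵢ t}`,
the Volterra Euler scheme `X` (driven by arbitrary increments `w`) and the
multifactor Euler scheme `X̂` (with factors `X̂ⁱ, Ŷⁱ`) coincide at each grid point
`t_k = kT/N` for `0 ≤ k ≤ N`. -/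
theorem stmt_9 {d n N : ℕ} (hd : 0 < d) (hn : 0 < n) (hN : 0 < N)
    (T : ℝ) (hT : 0 < T)
    (α : Fin n → ℝ) (hα : ∀ i, 0 ≤ α i)
    (ρ : Fin n → ℝ) (hρnonneg : ∀ i, 0 ≤ ρ i) (hρmono : StrictMono ρ)
    (B C : Fin n → Matrix (Fin d) (Fin d) ℝ)
    (b : (Fin d → ℝ) → (Fin d → ℝ)) (σ : (Fin d → ℝ) → Matrix (Fin d) (Fin d) ℝ)
    (x₀ : Fin d → ℝ) (w : ℕ → (Fin d → ℝ))
    (G₁ G₂ : ℝ → Matrix (Fin d) (Fin d) ℝ)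
    (hG₁ : ∀ t : ℝ, G₁ t = ∑ i : Fin n, (α i * Real.exp (-(ρ i) * t)) • B i)
    (hG₂ : ∀ t : ℝ, G₂ t = ∑ i : Fin n, (α i * Real.exp (-(ρ i) * t)) • C i)
    -- the Volterra Euler scheme
    (X : ℕ → (Fin d → ℝ)) (hX0 : X 0 = x₀)
    (hX : ∀ k, k < N → X (k + 1) = x₀ +
        (∑ j ∈ Finset.range (k + 1),
          (T / N) • (G₁ (((k : ℝ) + 1 - (j : ℝ)) * T / N)).mulVec (b (X j))) +
        ∑ j ∈ Finset.range (k + 1),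
          (G₂ (((k : ℝ) + 1 - (j : ℝ)) * T / N)).mulVec ((σ (X j)).mulVec (w j)))
    -- the multifactor Euler scheme
    (Xi Yi : Fin n → ℕ → (Fin d → ℝ)) (hXi0 : ∀ i, Xi i 0 = 0) (hYi0 : ∀ i, Yi i 0 = 0)
    (Xhat : ℕ → (Fin d → ℝ))
    (hXhat : ∀ k, Xhat k = x₀ + (∑ i : Fin n, α i • (B i).mulVec (Xi i k)) +
        ∑ i : Fin n, α i • (C i).mulVec (Yi i k))
    (hXi : ∀ i k, k < N → Xi i (k + 1) =
        Real.exp (-(ρ i) * (T / N)) • (Xi i k + (T / N) • b (Xhat k)))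
    (hYi : ∀ i k, k < N → Yi i (k + 1) =
        Real.exp (-(ρ i) * (T / N)) • (Yi i k + (σ (Xhat k)).mulVec (w k))) :
    ∀ k, k ≤ N → X k = Xhat k := by
  -- closed form for the factors
  have hXiCF : ∀ (i : Fin n) (k : ℕ), k ≤ N → Xi i k =
      ∑ j ∈ Finset.range k,
        Real.exp (-(ρ i) * (((k : ℝ) - (j : ℝ)) * T / N)) • ((T / N) • b (Xhat j)) := by
    intro i k
    induction k with
    | zero => intro _; simp [hXi0]
    | succ k ih =>
      intro hk
      rw [hXi i k (by omega), ih (by omega), Finset.sum_range_succ, smul_add,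
        Finset.smul_sum]
      push_cast
      congr 1
      · refine Finset.sum_congr rfl fun j hj => ?_
        have harg : (-(ρ i)) * (T / (N : ℝ)) + (-(ρ i)) * (((k : ℝ) - (j : ℝ)) * T / N)
            = (-(ρ i)) * (((k : ℝ) + 1 - (j : ℝ)) * T / N) := by ring
        rw [smul_smul, ← Real.exp_add, harg]
      · have harg : (-(ρ i)) * (T / (N : ℝ))
            = (-(ρ i)) * (((k : ℝ) + 1 - (k : ℝ)) * T / N) := by ring
        rw [harg]
  have hYiCF : ∀ (i : Fin n) (k : ℕ), k ≤ N → Yi i k =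
      ∑ j ∈ Finset.range k,
        Real.exp (-(ρ i) * (((k : ℝ) - (j : ℝ)) * T / N)) • ((σ (Xhat j)).mulVec (w j)) := by
    intro i k
    induction k with
    | zero => intro _; simp [hYi0]
    | succ k ih =>
      intro hk
      rw [hYi i k (by omega), ih (by omega), Finset.sum_range_succ, smul_add,
        Finset.smul_sum]
      push_cast
      congr 1
      · refine Finset.sum_congr rfl fun j hj => ?_
        have harg : (-(ρ i)) * (T / (N : ℝ)) + (-(ρ i)) * (((k : ℝ) - (j : ℝ)) * T / N)
            = (-(ρ i)) * (((k : ℝ) + 1 - (j : ℝ)) * T / N) := by ring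
        rw [smul_smul, ← Real.exp_add, harg]
      · have harg : (-(ρ i)) * (T / (N : ℝ))
            = (-(ρ i)) * (((k : ℝ) + 1 - (k : ℝ)) * T / N) := by ring
        rw [harg]
  have key : ∀ k, k ≤ N → ∀ j, j ≤ k → X j = Xhat j := by
    intro k
    induction k with
    | zero =>
      intro _ j hj
      interval_cases j
      rw [hX0, hXhat 0]
      simp [hXi0, hYi0]
    | succ k ih =>
      intro hk j hj
      rcases Nat.lt_succ_iff_lt_or_eq.mp (Nat.lt_succ_of_le hj) with h | h
      · exact ih (by omega) j (by omega)
      · subst h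
        have hXj : ∀ j ∈ Finset.range (k + 1), X j = Xhat j := fun j hj =>
          ih (by omega) j (by have := Finset.mem_range.mp hj; omega)
        rw [hX k (by omega), hXhat (k + 1)]
        congr 1
        · congr 1
          calc ∑ j ∈ Finset.range (k + 1),
                (T / N) • (G₁ (((k : ℝ) + 1 - (j : ℝ)) * T / N)).mulVec (b (X j))
              = ∑ j ∈ Finset.range (k + 1), ∑ i : Fin n,
                  ((T / N) * (α i * Real.exp (-(ρ i) * (((k : ℝ) + 1 - (j : ℝ)) * T / N)))) •
                    (B i).mulVec (b (Xhat j)) := by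
                refine Finset.sum_congr rfl fun j hj => ?_
                rw [hXj j hj, hG₁, sum_mulVec', Finset.smul_sum]
                refine Finset.sum_congr rfl fun i _ => ?_
                rw [Matrix.smul_mulVec, smul_smul]
            _ = ∑ i : Fin n, ∑ j ∈ Finset.range (k + 1),
                  ((T / N) * (α i * Real.exp (-(ρ i) * (((k : ℝ) + 1 - (j : ℝ)) * T / N)))) •
                    (B i).mulVec (b (Xhat j)) := Finset.sum_comm
            _ = ∑ i : Fin n, α i • (B i).mulVec (Xi i (k + 1)) := by
                refine Finset.sum_congr rfl fun i _ => ?_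
                rw [hXiCF i (k + 1) hk, mulVec_sum', Finset.smul_sum]
                push_cast
                refine Finset.sum_congr rfl fun j hj => ?_
                rw [Matrix.mulVec_smul, Matrix.mulVec_smul, smul_smul,
                  smul_smul]
                congr 1
                ring
        · calc ∑ j ∈ Finset.range (k + 1),
                (G₂ (((k : ℝ) + 1 - (j : ℝ)) * T / N)).mulVec ((σ (X j)).mulVec (w j))
              = ∑ j ∈ Finset.range (k + 1), ∑ i : Fin n,
                  (α i * Real.exp (-(ρ i) * (((k : ℝ) + 1 - (j : ℝ)) * T / N))) •
                    (C i).mulVec ((σ (Xhat j)).mulVec (w j)) := by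
                refine Finset.sum_congr rfl fun j hj => ?_
                rw [hXj j hj, hG₂, sum_mulVec']
                refine Finset.sum_congr rfl fun i _ => ?_
                rw [Matrix.smul_mulVec]
            _ = ∑ i : Fin n, ∑ j ∈ Finset.range (k + 1),
                  (α i * Real.exp (-(ρ i) * (((k : ℝ) + 1 - (j : ℝ)) * T / N))) •
                    (C i).mulVec ((σ (Xhat j)).mulVec (w j)) := Finset.sum_comm
            _ = ∑ i : Fin n, α i • (C i).mulVec (Yi i (k + 1)) := by
                refine Finset.sum_congr rfl fun i _ => ?_
                rw [hYiCF i (k + 1) hk, mulVec_sum', Finset.smul_sum]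
                push_cast
                refine Finset.sum_congr rfl fun j hj => ?_
                rw [Matrix.mulVec_smul, smul_smul]
  exact fun k hk => key k hk k le_rfl
end

section
/- Let λ be a nonnegative Borel measure on [0,∞), K > 0 with 0 < λ([0,K)) < ∞, n ∈ ℕ*, and set I_i := [(i−1)K/n, iK/n) for 1 ≤ i ≤ n. Assume λ(I_i) > 0 for every i and define the barycentric points ρ*_i := (∫_{I_i} ρ λ(dρ))/λ(I_i). Then for every t ≥ 0, | ∫_{[0,K)} e^{−ρt} λ(dρ) − ∑_{i=1}^n λ(I_i) e^{−ρ*_i t} | ≤ (t²K²/(2n²))·λ([0,K)). -/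
open MeasureTheory
open scoped ENNReal


lemma exp_lip (a b : ℝ) (ha : 0 ≤ a) (hb : 0 ≤ b) :
    |Real.exp (-a) - Real.exp (-b)| ≤ |a - b| := by
  wlog h : a ≤ b generalizing a b
  · rw [abs_sub_comm, abs_sub_comm a b]; exact this b a hb ha (le_of_not_ge h)
  have e1 : Real.exp (-a) * Real.exp (a - b) = Real.exp (-b) := by
    rw [← Real.exp_add]; ring_nf
  have e2 : 1 + (a - b) ≤ Real.exp (a - b) := by linarith [Real.add_one_le_exp (a - b)]
  have e3 : Real.exp (-a) ≤ 1 := Real.exp_le_one_iff.mpr (by linarith)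
  have e4 : (0:ℝ) < Real.exp (-a) := Real.exp_pos _
  have e5 : Real.exp (-b) ≤ Real.exp (-a) := Real.exp_le_exp.mpr (by linarith)
  rw [abs_of_nonneg (by linarith), abs_of_nonpos (by linarith)]
  nlinarith

lemma exp_taylor (x y : ℝ) (hx : 0 ≤ x) (hy : 0 ≤ y) :
    |Real.exp (-x) - Real.exp (-y) + Real.exp (-y) * (x - y)| ≤ (x - y) ^ 2 / 2 := by
  have hc : Continuous fun s : ℝ => Real.exp (-s) := by fun_prop
  have hg : Continuous fun s : ℝ => Real.exp (-y) - Real.exp (-s) := by fun_prop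
  have hint : ∀ u v : ℝ, ∫ s in u..v, Real.exp (-s) = Real.exp (-u) - Real.exp (-v) := by
    intro u v
    rw [intervalIntegral.integral_comp_neg (fun s => Real.exp s), integral_exp]
  have hrep : Real.exp (-x) - Real.exp (-y) + Real.exp (-y) * (x - y)
      = ∫ s in y..x, (Real.exp (-y) - Real.exp (-s)) := by
    rw [intervalIntegral.integral_sub intervalIntegrable_const (hc.intervalIntegrable _ _),
      hint, intervalIntegral.integral_const]
    simp only [smul_eq_mul]
    ring
  have hptw : ∀ s : ℝ, 0 ≤ s → |Real.exp (-y) - Real.exp (-s)| ≤ |s - y| := by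
    intro s hs
    rw [abs_sub_comm s y]
    exact exp_lip y s hy hs
  rw [hrep]
  rcases le_total y x with hxy | hxy
  · have h1 : |∫ s in y..x, (Real.exp (-y) - Real.exp (-s))|
        ≤ ∫ s in y..x, |Real.exp (-y) - Real.exp (-s)| :=
      intervalIntegral.abs_integral_le_integral_abs hxy
    have h2 : ∫ s in y..x, |Real.exp (-y) - Real.exp (-s)| ≤ ∫ s in y..x, (s - y) := by
      apply intervalIntegral.integral_mono_on hxy (hg.abs.intervalIntegrable _ _)
        ((continuous_id.sub continuous_const).intervalIntegrable _ _)
      intro s hs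
      have h3 := hptw s (le_trans hy hs.1)
      have h4 : |s - y| = s - y := abs_of_nonneg (by linarith [hs.1])
      exact le_trans h3 (le_of_eq h4)
    have h4 : ∫ s in y..x, (s - y) = (x - y) ^ 2 / 2 := by
      rw [intervalIntegral.integral_sub (intervalIntegral.intervalIntegrable_id)
        intervalIntegrable_const, integral_id, intervalIntegral.integral_const]
      simp only [smul_eq_mul]
      ring
    calc |∫ s in y..x, (Real.exp (-y) - Real.exp (-s))| ≤ _ := h1
      _ ≤ _ := h2
      _ = (x - y) ^ 2 / 2 := h4
  · rw [intervalIntegral.integral_symm, abs_neg]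
    have h1 : |∫ s in x..y, (Real.exp (-y) - Real.exp (-s))|
        ≤ ∫ s in x..y, |Real.exp (-y) - Real.exp (-s)| :=
      intervalIntegral.abs_integral_le_integral_abs hxy
    have h2 : ∫ s in x..y, |Real.exp (-y) - Real.exp (-s)| ≤ ∫ s in x..y, (y - s) := by
      apply intervalIntegral.integral_mono_on hxy (hg.abs.intervalIntegrable _ _)
        ((continuous_const.sub continuous_id).intervalIntegrable _ _)
      intro s hs
      have h3 := hptw s (le_trans hx hs.1)
      have h4 : |s - y| = y - s := by
        rw [abs_of_nonpos (by linarith [hs.2])]; ring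
      exact le_trans h3 (le_of_eq h4)
    have h4 : ∫ s in x..y, (y - s) = (x - y) ^ 2 / 2 := by
      rw [intervalIntegral.integral_sub intervalIntegrable_const
        intervalIntegral.intervalIntegrable_id, integral_id, intervalIntegral.integral_const]
      simp only [smul_eq_mul]
      ring
    calc |∫ s in x..y, (Real.exp (-y) - Real.exp (-s))| ≤ _ := h1
      _ ≤ _ := h2
      _ = (x - y) ^ 2 / 2 := h4

/-- Barycentric discretization error for a truncated completely monotone kernel:
with `I_i = [iK/n, (i+1)K/n)` for `i = 0,…,n-1` (of positive `μ`-measure) and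
barycenters `ρ*_i = (∫_{I_i} ρ μ(dρ))/μ(I_i)`, for every `t ≥ 0`:
`|∫_{[0,K)} e^{-ρt} μ(dρ) - ∑ᵢ μ(I_i) e^{-ρ*_i t}| ≤ (t²K²/(2n²)) μ([0,K))`. -/
theorem stmt_10 (μ : Measure ℝ) (K : ℝ) (hK : 0 < K) (n : ℕ) (hn : 0 < n)
    (hfin : μ (Set.Ico (0 : ℝ) K) < ⊤) (hpos : 0 < μ (Set.Ico (0 : ℝ) K))
    (hIpos : ∀ i : Fin n, 0 < μ (Set.Ico ((i : ℝ) * K / n) (((i : ℝ) + 1) * K / n)))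
    (ρstar : Fin n → ℝ)
    (hρstar : ∀ i : Fin n, ρstar i =
        (∫ ρ in Set.Ico ((i : ℝ) * K / n) (((i : ℝ) + 1) * K / n), ρ ∂μ) /
          (μ (Set.Ico ((i : ℝ) * K / n) (((i : ℝ) + 1) * K / n))).toReal)
    (t : ℝ) (ht : 0 ≤ t) :
    |(∫ ρ in Set.Ico (0 : ℝ) K, Real.exp (-ρ * t) ∂μ) -
        ∑ i : Fin n, (μ (Set.Ico ((i : ℝ) * K / n) (((i : ℝ) + 1) * K / n))).toReal *
          Real.exp (-(ρstar i) * t)| ≤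
      t ^ 2 * K ^ 2 / (2 * (n : ℝ) ^ 2) * (μ (Set.Ico (0 : ℝ) K)).toReal := by
  have hn' : (0:ℝ) < n := by exact_mod_cast hn
  set c : ℝ := t ^ 2 * K ^ 2 / (2 * (n : ℝ) ^ 2) with hc
  set S : Fin n → Set ℝ := fun i => Set.Ico ((i : ℝ) * K / n) (((i : ℝ) + 1) * K / n) with hS
  have hai0 : ∀ i : Fin n, 0 ≤ (i : ℝ) * K / n := fun i => by positivity
  have haiK : ∀ i : Fin n, ((i : ℝ) + 1) * K / n ≤ K := by
    intro i
    rw [div_le_iff₀ hn']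
    have h1 : (i : ℝ) + 1 ≤ n := by exact_mod_cast i.2
    nlinarith [hK.le]
  have hsub : ∀ i : Fin n, S i ⊆ Set.Ico (0:ℝ) K := by
    intro i ρ hρ
    exact ⟨le_trans (hai0 i) hρ.1, lt_of_lt_of_le hρ.2 (haiK i)⟩
  have hSm : ∀ i : Fin n, MeasurableSet (S i) := fun i => measurableSet_Ico
  have hμS : ∀ i : Fin n, μ (S i) < ⊤ := fun i => lt_of_le_of_lt (measure_mono (hsub i)) hfin
  have hm0 : ∀ i : Fin n, 0 < (μ (S i)).toReal :=
    fun i => ENNReal.toReal_pos (hIpos i).ne' (hμS i).ne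
  have hdisj : Pairwise (Function.onFun Disjoint S) := by
    have key : ∀ i j : Fin n, i < j → Disjoint (S i) (S j) := by
      intro i j hij
      apply Set.Ico_disjoint_Ico.mpr
      have h1 : (i : ℝ) + 1 ≤ (j : ℝ) := by exact_mod_cast Nat.succ_le_of_lt hij
      have h2 : ((i:ℝ)+1)*K/n ≤ (j:ℝ)*K/n := by
        rw [div_le_div_iff₀ hn' hn']
        nlinarith [mul_nonneg (mul_nonneg (sub_nonneg.mpr h1) hK.le) hn'.le]
      calc min (((i:ℝ)+1)*K/n) (((j:ℝ)+1)*K/n) ≤ ((i:ℝ)+1)*K/n := min_le_left _ _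
        _ ≤ (j:ℝ)*K/n := h2
        _ ≤ max ((i:ℝ)*K/n) ((j:ℝ)*K/n) := le_max_right _ _
    intro i j hij
    rcases hij.lt_or_gt with h | h
    · exact key i j h
    · exact (key j i h).symm
  have hunion : (⋃ i, S i) = Set.Ico (0:ℝ) K := by
    apply Set.Subset.antisymm (Set.iUnion_subset hsub)
    intro x hx
    have hx0 : 0 ≤ x := hx.1
    have hxK : x < K := hx.2
    have hy0 : 0 ≤ x * n / K := by positivity
    set j : ℕ := ⌊x * n / K⌋₊ with hj
    have hfl : (j:ℝ) ≤ x * n / K := Nat.floor_le hy0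
    have hfl2 : x * n / K < j + 1 := Nat.lt_floor_add_one _
    have hjn : j < n := by
      have h1 : x * n / K < n := by rw [div_lt_iff₀ hK]; nlinarith
      exact (Nat.floor_lt hy0).mpr (by exact_mod_cast h1)
    have hfl' : (j:ℝ) * K ≤ x * n := (le_div_iff₀ hK).mp hfl
    have hfl2' : x * n < ((j:ℝ) + 1) * K := (div_lt_iff₀ hK).mp hfl2
    refine Set.mem_iUnion.mpr ⟨⟨j, hjn⟩, ?_, ?_⟩
    · show (j:ℝ) * K / n ≤ x
      rw [div_le_iff₀ hn']; linarith
    · show x < ((j:ℝ) + 1) * K / n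
      rw [lt_div_iff₀ hn']; linarith
  have hexpInt : IntegrableOn (fun ρ => Real.exp (-ρ * t)) (Set.Ico (0:ℝ) K) μ := by
    apply Measure.integrableOn_of_bounded (M := 1) hfin.ne
      (Continuous.aestronglyMeasurable (by fun_prop))
    filter_upwards [ae_restrict_mem measurableSet_Ico] with ρ hρ
    rw [Real.norm_eq_abs, abs_of_pos (Real.exp_pos _)]
    exact Real.exp_le_one_iff.mpr (by nlinarith [hρ.1])
  have hexpInti : ∀ i : Fin n, IntegrableOn (fun ρ => Real.exp (-ρ * t)) (S i) μ :=
    fun i => hexpInt.mono_set (hsub i)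
  have hidInt : ∀ i : Fin n, IntegrableOn (fun ρ => ρ) (S i) μ := by
    intro i
    apply Measure.integrableOn_of_bounded (M := K) (hμS i).ne aestronglyMeasurable_id
    filter_upwards [ae_restrict_mem (hSm i)] with ρ hρ
    simp only [id_eq, Real.norm_eq_abs]
    rw [abs_of_nonneg (le_trans (hai0 i) hρ.1)]
    exact le_of_lt (lt_of_lt_of_le hρ.2 (haiK i))
  have hcInt : ∀ (i : Fin n) (b : ℝ), IntegrableOn (fun _ => b) (S i) μ :=
    fun i b => integrableOn_const (hμS i).ne
  have hmean : ∀ i : Fin n, ∫ ρ in S i, ρ ∂μ = ρstar i * (μ (S i)).toReal := by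
    intro i
    rw [hρstar i]
    show (∫ ρ in S i, ρ ∂μ) = (∫ ρ in S i, ρ ∂μ) / (μ (S i)).toReal * (μ (S i)).toReal
    rw [div_mul_cancel₀ _ (hm0 i).ne']
  have hρlb : ∀ i : Fin n, (i:ℝ)*K/n ≤ ρstar i := by
    intro i
    rw [hρstar i, le_div_iff₀ (hm0 i)]
    calc (i:ℝ)*K/n * (μ (S i)).toReal = ∫ _ρ in S i, ((i:ℝ)*K/n) ∂μ := by
          rw [setIntegral_const, measureReal_def, smul_eq_mul, mul_comm]
      _ ≤ ∫ ρ in S i, ρ ∂μ :=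
          setIntegral_mono_on (hcInt i _) (hidInt i) (hSm i) (fun ρ hρ => hρ.1)
  have hρub : ∀ i : Fin n, ρstar i ≤ ((i:ℝ)+1)*K/n := by
    intro i
    rw [hρstar i, div_le_iff₀ (hm0 i)]
    calc ∫ ρ in S i, ρ ∂μ ≤ ∫ _ρ in S i, (((i:ℝ)+1)*K/n) ∂μ :=
          setIntegral_mono_on (hidInt i) (hcInt i _) (hSm i) (fun ρ hρ => hρ.2.le)
      _ = ((i:ℝ)+1)*K/n * (μ (S i)).toReal := by
          rw [setIntegral_const, measureReal_def, smul_eq_mul, mul_comm]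
  have hρ0 : ∀ i : Fin n, 0 ≤ ρstar i := fun i => le_trans (hai0 i) (hρlb i)
  have hzero : ∀ i : Fin n, ∫ ρ in S i, (ρ - ρstar i) ∂μ = 0 := by
    intro i
    rw [integral_sub (hidInt i) (hcInt i _), hmean i, setIntegral_const, measureReal_def, smul_eq_mul]
    ring
  have hkey : ∀ i : Fin n,
      |(∫ ρ in S i, Real.exp (-ρ * t) ∂μ) - (μ (S i)).toReal * Real.exp (-(ρstar i) * t)|
        ≤ c * (μ (S i)).toReal := by
    intro i
    have hlin : (fun ρ : ℝ => Real.exp (-(ρstar i) * t) * (ρ * t - ρstar i * t))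
        = fun ρ => (Real.exp (-(ρstar i) * t) * t) * (ρ - ρstar i) := by
      funext ρ; ring
    have hA : Integrable (fun ρ => Real.exp (-ρ * t) - Real.exp (-(ρstar i) * t))
        (μ.restrict (S i)) := (hexpInti i).sub (hcInt i _)
    have hC : Integrable (fun ρ => Real.exp (-(ρstar i) * t) * (ρ * t - ρstar i * t))
        (μ.restrict (S i)) := by
      rw [hlin]
      exact (((hidInt i).sub (hcInt i _)) : Integrable (fun ρ => ρ - ρstar i)
        (μ.restrict (S i))).const_mul _
    have e2 : ∫ ρ in S i, (Real.exp (-ρ * t) - Real.exp (-(ρstar i) * t)) ∂μ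
        = (∫ ρ in S i, Real.exp (-ρ * t) ∂μ) - (μ (S i)).toReal * Real.exp (-(ρstar i) * t) := by
      rw [integral_sub (hexpInti i) (hcInt i _), setIntegral_const, measureReal_def, smul_eq_mul]
    have e3 : ∫ ρ in S i, (Real.exp (-(ρstar i) * t) * (ρ * t - ρstar i * t)) ∂μ = 0 := by
      rw [hlin, integral_const_mul _, hzero i, mul_zero]
    have heq : (∫ ρ in S i, Real.exp (-ρ * t) ∂μ) - (μ (S i)).toReal * Real.exp (-(ρstar i) * t)
        = ∫ ρ in S i, (Real.exp (-ρ * t) - Real.exp (-(ρstar i) * t)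
            + Real.exp (-(ρstar i) * t) * (ρ * t - ρstar i * t)) ∂μ := by
      rw [integral_add hA hC, e2, e3, add_zero]
    rw [heq]
    have hbound : ∀ ρ ∈ S i, ‖Real.exp (-ρ * t) - Real.exp (-(ρstar i) * t)
        + Real.exp (-(ρstar i) * t) * (ρ * t - ρstar i * t)‖ ≤ c := by
      intro ρ hρ
      have hρ0' : 0 ≤ ρ := le_trans (hai0 i) hρ.1
      have h1 := exp_taylor (ρ * t) (ρstar i * t) (mul_nonneg hρ0' ht)
        (mul_nonneg (hρ0 i) ht)
      rw [Real.norm_eq_abs]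
      simp only [neg_mul] at h1 ⊢
      have hba : ((i:ℝ)+1)*K/n - (i:ℝ)*K/n = K/n := by field_simp; ring
      have hd1 : ρ - ρstar i ≤ K/n := by
        have := hρ.2.le; have := hρlb i; linarith
      have hd2 : -(K/n) ≤ ρ - ρstar i := by
        have := hρ.1; have := hρub i; linarith
      have hsq : (ρ - ρstar i)^2 ≤ (K/n)^2 := sq_le_sq' hd2 hd1
      have h2 : (ρ * t - ρstar i * t) ^ 2 / 2 ≤ c := by
        have e1 : (ρ * t - ρstar i * t) ^ 2 / 2 = t^2 * (ρ - ρstar i)^2 / 2 := by ring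
        have e2 : t^2 * (ρ - ρstar i)^2 / 2 ≤ t^2 * (K/n)^2 / 2 := by
          nlinarith [sq_nonneg t]
        have e3 : t^2 * (K/n)^2 / 2 = c := by
          rw [hc, div_pow]; ring
        linarith
      linarith
    have := norm_setIntegral_le_of_norm_le_const (μ := μ) (hμS i) hbound
    rwa [Real.norm_eq_abs, measureReal_def] at this
  have hmsum : (μ (Set.Ico (0:ℝ) K)).toReal = ∑ i : Fin n, (μ (S i)).toReal := by
    rw [← hunion, measure_iUnion hdisj hSm, tsum_fintype,
      ENNReal.toReal_sum (fun i _ => (hμS i).ne)]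
  have hsplit : ∫ ρ in Set.Ico (0:ℝ) K, Real.exp (-ρ * t) ∂μ
      = ∑ i : Fin n, ∫ ρ in S i, Real.exp (-ρ * t) ∂μ := by
    rw [← hunion]
    exact integral_iUnion_fintype hSm hdisj hexpInti
  rw [hsplit, ← Finset.sum_sub_distrib]
  calc |∑ i : Fin n, ((∫ ρ in S i, Real.exp (-ρ * t) ∂μ)
        - (μ (S i)).toReal * Real.exp (-(ρstar i) * t))|
      ≤ ∑ i : Fin n, |(∫ ρ in S i, Real.exp (-ρ * t) ∂μ)
        - (μ (S i)).toReal * Real.exp (-(ρstar i) * t)| := Finset.abs_sum_le_sum_abs _ _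
    _ ≤ ∑ i : Fin n, c * (μ (S i)).toReal := Finset.sum_le_sum (fun i _ => hkey i)
    _ = c * ∑ i : Fin n, (μ (S i)).toReal := by rw [Finset.mul_sum]
    _ = c * (μ (Set.Ico (0:ℝ) K)).toReal := by rw [hmsum]
end

section
/- Let H ∈ (0, 1/2), T > 0, β ∈ (0,1), and let M : [0,∞) → ℝ be four times continuously differentiable with all derivatives of order 0 through 4 bounded in absolute value by B, and Lipschitz with constant L̄. For K > 1 and n ∈ ℕ*, define G^K(t) := ∫₀^K e^{−ρt} M(ρ) c_H ρ^{−H−1/2} dρ, and define Ĝ^K(t) := ∑_{i=1}^n λ_H(I_i) M(ρ_i) e^{−ρ_i t} + (c_H(K−K^β)/(6n)) ∑_{i=1}^n [ (ρ_{i,0})^{−H−1/2} M(ρ_{i,0}) e^{−ρ_{i,0} t} + 4(ρ_{i,1})^{−H−1/2} M(ρ_{i,1}) e^{−ρ_{i,1} t} + (ρ_{i,2})^{−H−1/2} M(ρ_{i,2}) e^{−ρ_{i,2} t} ], where I_i := [(i−1)K^β/n, iK^β/n), ρ_i ∈ I_i is arbitrary, ρ_{i,0} := K^β + (i−1)(K−K^β)/n,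 ρ_{i,1} := K^β + (2i−1)(K−K^β)/(2n), and ρ_{i,2} := K^β + i(K−K^β)/n. Then there exists a constant C ∈ (0,∞), depending only on H, T, β, B and L̄, such that for all K > 1, n ∈ ℕ* and t ∈ [0,T], |Ĝ^K(t) − G^K(t)| ≤ C·( K^{β(3/2−H)}/n + K^{5−β(H+1/2)}/n⁴ ). -/
set_option maxHeartbeats 3000000


open MeasureTheory intervalIntegral
open scoped ENNReal

/-- `c_H = 1/(Γ(H+1/2)Γ(1/2-H))`. -/
noncomputable def cH (H : ℝ) : ℝ := 1 / (Real.Gamma (H + 1 / 2) * Real.Gamma (1 / 2 - H))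

/-- `λ_H`, the measure on `(0,∞)` with Lebesgue density `c_H ρ^{-H-1/2}`. -/
noncomputable def lambdaH (H : ℝ) : Measure ℝ :=
  (volume.restrict (Set.Ioi (0 : ℝ))).withDensity
    fun ρ => ENNReal.ofReal (cH H * ρ ^ (-H - 1 / 2 : ℝ))

section Helpers




lemma eqOn_iterDW_subset {f : ℝ → ℝ} {s t : Set ℝ} (hst : s ⊆ t)
    (hs : UniqueDiffOn ℝ s) (ht : UniqueDiffOn ℝ t) {n k : ℕ}
    (hf : ContDiffOn ℝ (n : ℕ∞) f t) (hk : k ≤ n) :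
    Set.EqOn (iteratedDerivWithin k f s) (iteratedDerivWithin k f t) s := by
  induction k with
  | zero => simp [iteratedDerivWithin_zero]; exact fun x _ => rfl
  | succ k ih =>
    intro x hx
    have hk' : k ≤ n := by omega
    have ihh := ih hk'
    rw [iteratedDerivWithin_succ, iteratedDerivWithin_succ]
    have h1 : derivWithin (iteratedDerivWithin k f s) s x
        = derivWithin (iteratedDerivWithin k f t) s x :=
      derivWithin_congr ihh (ihh hx)
    have hdiff : DifferentiableWithinAt ℝ (iteratedDerivWithin k f t) t x :=
      (hf.differentiableOn_iteratedDerivWithin (by exact_mod_cast by omega) ht) x (hst hx)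
    rw [h1, derivWithin_subset hst (hs x hx) hdiff]

lemma eqOn_iterDW_chain {s : Set ℝ} (hs : IsOpen s) (F : ℕ → ℝ → ℝ)
    (hF : ∀ k, ∀ x ∈ s, HasDerivAt (F k) (F (k+1) x) x) (k : ℕ) :
    Set.EqOn (iteratedDerivWithin k (F 0) s) (F k) s := by
  induction k with
  | zero => simp [iteratedDerivWithin_zero]; exact fun x _ => rfl
  | succ k ih =>
    intro x hx
    rw [iteratedDerivWithin_succ, derivWithin_of_isOpen hs hx]
    have hev : iteratedDerivWithin k (F 0) s =ᶠ[nhds x] F k :=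
      Filter.eventuallyEq_of_mem (hs.mem_nhds hx) ih
    rw [hev.deriv_eq]
    exact (hF k x hx).deriv

lemma iterDW_exp (t : ℝ) {s : Set ℝ} (hs : IsOpen s) (k : ℕ) :
    Set.EqOn (iteratedDerivWithin k (fun ρ => Real.exp (-ρ * t)) s)
      (fun ρ => (-t)^k * Real.exp (-ρ * t)) s := by
  have hF : ∀ j, ∀ x ∈ s, HasDerivAt (fun y => (-t)^j * Real.exp (-y * t))
      ((-t)^(j+1) * Real.exp (-x * t)) x := by
    intro j x _
    have h0 : HasDerivAt (fun y : ℝ => -y * t) (-t) x := by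
      simpa using ((hasDerivAt_id x).neg.mul_const t)
    have h1 := h0.exp
    have h2 := h1.const_mul ((-t)^j)
    refine h2.congr_deriv ?_
    ring
  have h := eqOn_iterDW_chain hs (fun j => fun y => (-t)^j * Real.exp (-y * t)) hF k
  have h0 : (fun y => (-t)^0 * Real.exp (-y * t)) = fun ρ => Real.exp (-ρ * t) := by
    funext y; simp
  rwa [h0] at h

lemma iterDW_rpow (c r : ℝ) (k : ℕ) :
    Set.EqOn (iteratedDerivWithin k (fun ρ => c * ρ ^ r) (Set.Ioi (1/2 : ℝ)))
      (fun ρ => (c * ∏ j ∈ Finset.range k, (r - j)) * ρ ^ (r - k)) (Set.Ioi (1/2 : ℝ)) := by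
  have hF : ∀ j, ∀ x ∈ Set.Ioi (1/2 : ℝ),
      HasDerivAt (fun y => (c * ∏ i ∈ Finset.range j, (r - i)) * y ^ (r - j))
        ((c * ∏ i ∈ Finset.range (j+1), (r - i)) * x ^ (r - (j+1 : ℕ))) x := by
    intro j x hx
    have hx0 : x ≠ 0 := by
      have : (0:ℝ) < x := lt_trans (by norm_num) hx
      exact ne_of_gt this
    have h1 := (Real.hasDerivAt_rpow_const (p := r - j) (Or.inl hx0)).const_mul
      (c * ∏ i ∈ Finset.range j, (r - i))
    refine h1.congr_deriv ?_
    rw [Finset.prod_range_succ]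
    push_cast
    have he : r - ((j:ℝ) + 1) = r - j - 1 := by ring
    rw [he]
    ring
  have h := eqOn_iterDW_chain isOpen_Ioi
    (fun j => fun y => (c * ∏ i ∈ Finset.range j, (r - i)) * y ^ (r - j)) hF k
  have h0 : (fun y : ℝ => (c * ∏ i ∈ Finset.range 0, (r - i)) * y ^ (r - (0:ℕ)))
      = fun ρ => c * ρ ^ r := by
    funext y; simp
  rwa [h0] at h

lemma phi_fourth_bound {M : ℝ → ℝ} {B T t c r : ℝ}
    (hM : ContDiffOn ℝ 4 M (Set.Ici 0))
    (hMb : ∀ k : ℕ, k ≤ 4 → ∀ ρ : ℝ, 0 ≤ ρ → |iteratedDerivWithin k M (Set.Ici 0) ρ| ≤ B)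
    (ht0 : 0 ≤ t) (htT : t ≤ T) (hc : 0 ≤ c) (hr1 : -1 ≤ r) (hr0 : r ≤ 0)
    {x : ℝ} (hx : 1 ≤ x) :
    |iteratedDerivWithin 4 (fun ρ => Real.exp (-ρ * t) * M ρ * (c * ρ ^ r))
        (Set.Ioi (1/2 : ℝ)) x|
      ≤ (16 * (16 * (1+T)^4 * B)) * (24 * c) * x ^ r := by
  set s : Set ℝ := Set.Ioi (1/2 : ℝ) with hsdef
  have hsub : s ⊆ Set.Ici (0:ℝ) := fun y hy => le_of_lt (lt_trans (by norm_num : (0:ℝ) < 1/2) hy)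
  have hsopen : IsOpen s := isOpen_Ioi
  have hsu : UniqueDiffOn ℝ s := hsopen.uniqueDiffOn
  have hxs : x ∈ s := by simp only [hsdef, Set.mem_Ioi]; linarith
  have hB0 : 0 ≤ B := le_trans (abs_nonneg _) (hMb 0 (by norm_num) 0 le_rfl)
  have hT0 : (0:ℝ) ≤ T := le_trans ht0 htT
  -- bound on exp factor derivatives
  have hE : ∀ j : ℕ, j ≤ 4 → ∀ y ∈ s,
      |iteratedDerivWithin j (fun ρ => Real.exp (-ρ * t)) s y| ≤ (1+T)^4 := by
    intro j hj y hy
    rw [iterDW_exp t hsopen j hy]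
    have hy0 : (0:ℝ) < y := lt_trans (by norm_num) hy
    rw [abs_mul, abs_pow, abs_neg, abs_of_nonneg ht0, Real.abs_exp]
    have h1 : t^j ≤ (1+T)^4 := by
      calc t^j ≤ (1+T)^j := pow_le_pow_left₀ ht0 (by linarith) j
        _ ≤ (1+T)^4 := pow_le_pow_right₀ (by linarith) hj
    have h2 : Real.exp (-y * t) ≤ 1 := by
      rw [Real.exp_le_one_iff]
      nlinarith
    calc t^j * Real.exp (-y*t) ≤ t^j * 1 :=
          mul_le_mul_of_nonneg_left h2 (pow_nonneg ht0 j)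
      _ = t^j := mul_one _
      _ ≤ (1+T)^4 := h1
  -- bound on M derivatives on s
  have hMs : ∀ j : ℕ, j ≤ 4 → ∀ y ∈ s, |iteratedDerivWithin j M s y| ≤ B := by
    intro j hj y hy
    rw [eqOn_iterDW_subset hsub hsu (uniqueDiffOn_Ici 0) (n := 4)
      (by exact_mod_cast hM) hj hy]
    exact hMb j hj y (hsub hy)
  -- contDiffOn facts
  have hEc : ContDiffOn ℝ 4 (fun ρ : ℝ => Real.exp (-ρ * t)) s :=
    (Real.contDiff_exp.comp ((contDiff_id.neg).mul contDiff_const)).contDiffOn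
  have hMc : ContDiffOn ℝ 4 M s := hM.mono hsub
  have hGc : ContDiffOn ℝ 4 (fun ρ : ℝ => c * ρ ^ r) s := by
    intro y hy
    have hy0 : y ≠ 0 := ne_of_gt (lt_trans (by norm_num) hy)
    exact (contDiffAt_const.mul (Real.contDiffAt_rpow_const_of_ne hy0)).contDiffWithinAt
  -- bound on exp * M derivatives
  have hEM : ∀ j : ℕ, j ≤ 4 → ∀ y ∈ s,
      |iteratedDerivWithin j (fun ρ => Real.exp (-ρ * t) * M ρ) s y|
        ≤ 16 * (1+T)^4 * B := by
    intro j hj y hy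
    rw [← Real.norm_eq_abs, ← norm_iteratedFDerivWithin_eq_norm_iteratedDerivWithin]
    calc ‖iteratedFDerivWithin ℝ j (fun ρ => Real.exp (-ρ * t) * M ρ) s y‖
        ≤ ∑ i ∈ Finset.range (j + 1), (j.choose i : ℝ) *
            ‖iteratedFDerivWithin ℝ i (fun ρ => Real.exp (-ρ * t)) s y‖ *
            ‖iteratedFDerivWithin ℝ (j - i) M s y‖ :=
          norm_iteratedFDerivWithin_mul_le hEc hMc hsu hy (by exact_mod_cast hj)
      _ ≤ ∑ i ∈ Finset.range (j + 1), (j.choose i : ℝ) * ((1+T)^4 * B) := by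
          apply Finset.sum_le_sum
          intro i hi
          have hi4 : i ≤ 4 := by
            have := Finset.mem_range.mp hi; omega
          have hji4 : j - i ≤ 4 := by omega
          have he := hE i hi4 y hy
          have hm := hMs (j - i) hji4 y hy
          rw [norm_iteratedFDerivWithin_eq_norm_iteratedDerivWithin,
            norm_iteratedFDerivWithin_eq_norm_iteratedDerivWithin, Real.norm_eq_abs,
            Real.norm_eq_abs]
          rw [mul_assoc]
          exact mul_le_mul_of_nonneg_left
            (mul_le_mul he hm (abs_nonneg _) (by positivity)) (Nat.cast_nonneg _)
      _ = (∑ i ∈ Finset.range (j + 1), (j.choose i : ℝ)) * ((1+T)^4 * B) := by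
          rw [← Finset.sum_mul]
      _ ≤ 16 * ((1+T)^4 * B) := by
          apply mul_le_mul_of_nonneg_right _ (by positivity)
          have hsum : ∑ i ∈ Finset.range (j + 1), j.choose i = 2^j :=
            Nat.sum_range_choose j
          have h4 : (2:ℕ)^j ≤ 16 := by
            calc (2:ℕ)^j ≤ 2^4 := Nat.pow_le_pow_right (by norm_num) hj
              _ = 16 := by norm_num
          calc (∑ i ∈ Finset.range (j+1), (j.choose i : ℝ))
              = ((∑ i ∈ Finset.range (j+1), j.choose i : ℕ) : ℝ) := by push_cast; ring
            _ = ((2^j : ℕ) : ℝ) := by rw [hsum]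
            _ ≤ 16 := by exact_mod_cast h4
      _ = 16 * (1+T)^4 * B := by ring
  -- bound on rpow factor derivatives
  have hG : ∀ j : ℕ, j ≤ 4 → ∀ y ∈ s, 1 ≤ y →
      |iteratedDerivWithin j (fun ρ => c * ρ ^ r) s y| ≤ 24 * c * y ^ r := by
    intro j hj y hy hy1
    rw [iterDW_rpow c r j hy]
    have hy0 : (0:ℝ) < y := by linarith
    have hrp : (0:ℝ) < y ^ (r - j) := Real.rpow_pos_of_pos hy0 _
    rw [abs_mul, abs_of_pos hrp, abs_mul, abs_of_nonneg hc]
    have hprod : |∏ i ∈ Finset.range j, (r - i)| ≤ 24 := by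
      rw [Finset.abs_prod]
      calc ∏ i ∈ Finset.range j, |r - (i:ℝ)|
          ≤ ∏ i ∈ Finset.range j, ((i:ℝ) + 1) := by
            apply Finset.prod_le_prod (fun i _ => abs_nonneg _)
            intro i _
            rw [abs_sub_comm]
            calc |(i:ℝ) - r| ≤ |(i:ℝ)| + |r| := abs_sub _ _
              _ ≤ (i:ℝ) + 1 := by
                  rw [abs_of_nonneg (Nat.cast_nonneg i)]
                  have : |r| ≤ 1 := abs_le.mpr ⟨hr1, by linarith⟩
                  linarith
        _ ≤ 24 := by
            interval_cases j <;> norm_num [Finset.prod_range_succ]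
    have hexp : y ^ (r - j) ≤ y ^ r := by
      apply Real.rpow_le_rpow_of_exponent_le hy1
      have : (0:ℝ) ≤ (j:ℝ) := Nat.cast_nonneg j
      linarith
    calc c * |∏ i ∈ Finset.range j, (r - i)| * y ^ (r - j)
        ≤ c * 24 * y ^ r := by
          apply mul_le_mul (mul_le_mul_of_nonneg_left hprod hc) hexp (le_of_lt hrp)
          positivity
      _ = 24 * c * y ^ r := by ring
  -- final product bound
  rw [← Real.norm_eq_abs, ← norm_iteratedFDerivWithin_eq_norm_iteratedDerivWithin]
  have hEMc : ContDiffOn ℝ 4 (fun ρ => Real.exp (-ρ * t) * M ρ) s := hEc.mul hMc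
  calc ‖iteratedFDerivWithin ℝ 4 (fun ρ => Real.exp (-ρ * t) * M ρ * (c * ρ ^ r)) s x‖
      ≤ ∑ i ∈ Finset.range (4 + 1), ((4:ℕ).choose i : ℝ) *
          ‖iteratedFDerivWithin ℝ i (fun ρ => Real.exp (-ρ * t) * M ρ) s x‖ *
          ‖iteratedFDerivWithin ℝ (4 - i) (fun ρ => c * ρ ^ r) s x‖ :=
        norm_iteratedFDerivWithin_mul_le hEMc hGc hsu hxs (by norm_num)
    _ ≤ ∑ i ∈ Finset.range (4 + 1), ((4:ℕ).choose i : ℝ) *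
          ((16 * (1+T)^4 * B) * (24 * c * x ^ r)) := by
        apply Finset.sum_le_sum
        intro i hi
        have hi4 : i ≤ 4 := by have := Finset.mem_range.mp hi; omega
        have h1 := hEM i hi4 x hxs
        have h2 := hG (4 - i) (by omega) x hxs hx
        rw [norm_iteratedFDerivWithin_eq_norm_iteratedDerivWithin,
          norm_iteratedFDerivWithin_eq_norm_iteratedDerivWithin, Real.norm_eq_abs,
          Real.norm_eq_abs]
        rw [mul_assoc]
        exact mul_le_mul_of_nonneg_left
          (mul_le_mul h1 h2 (abs_nonneg _) (by positivity)) (Nat.cast_nonneg _)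
    _ = (∑ i ∈ Finset.range (4 + 1), ((4:ℕ).choose i : ℝ)) *
          ((16 * (1+T)^4 * B) * (24 * c * x ^ r)) := by rw [← Finset.sum_mul]
    _ = 16 * ((16 * (1+T)^4 * B) * (24 * c * x ^ r)) := by
        have : ∑ i ∈ Finset.range (4 + 1), ((4:ℕ).choose i : ℝ) = 16 := by
          simp [Finset.sum_range_succ]
          norm_num [Nat.choose]
        rw [this]
    _ = (16 * (16 * (1+T)^4 * B)) * (24 * c) * x ^ r := by ring




lemma cubic_integral (u v a0 a1 a2 a3 : ℝ) :
    ∫ x in u..v, (a0 + a1*(x-u) + a2*(x-u)^2 + a3*(x-u)^3)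
      = a0*(v-u) + a1*(v-u)^2/2 + a2*(v-u)^3/3 + a3*(v-u)^4/4 := by
  have hderiv : ∀ x ∈ Set.uIcc u v,
      HasDerivAt (fun x => a0*(x-u) + a1*(x-u)^2/2 + a2*(x-u)^3/3 + a3*(x-u)^4/4)
        (a0 + a1*(x-u) + a2*(x-u)^2 + a3*(x-u)^3) x := by
    intro x _
    have h1 : HasDerivAt (fun x : ℝ => (x - u)) 1 x := (hasDerivAt_id x).sub_const u
    have h2 := h1.pow 2
    have h3 := h1.pow 3
    have h4 := h1.pow 4
    have := (((h1.const_mul a0).add ((h2.const_mul a1).div_const 2)).add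
      ((h3.const_mul a2).div_const 3)).add ((h4.const_mul a3).div_const 4)
    refine this.congr_deriv ?_
    ring
  have hint : IntervalIntegrable (fun x => a0 + a1*(x-u) + a2*(x-u)^2 + a3*(x-u)^3)
      MeasureTheory.volume u v := by
    apply Continuous.intervalIntegrable
    continuity
  rw [intervalIntegral.integral_eq_sub_of_hasDerivAt hderiv hint]
  ring

lemma simpson_single {g : ℝ → ℝ} {u v M4 : ℝ} (huv : u < v)
    (hg : ContDiffOn ℝ 4 g (Set.Icc u v))
    (hb : ∀ y ∈ Set.Icc u v, |iteratedDerivWithin 4 g (Set.Icc u v) y| ≤ M4) :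
    |(v-u)/6 * (g u + 4 * g ((u+v)/2) + g v) - ∫ x in u..v, g x| ≤ M4 * (v-u)^5 := by
  have hMnn : 0 ≤ M4 := le_trans (abs_nonneg _) (hb u ⟨le_refl u, huv.le⟩)
  set d : ℕ → ℝ := fun k => iteratedDerivWithin k g (Set.Icc u v) u with hd
  set P : ℝ → ℝ := fun x => d 0 + d 1 * (x-u) + (d 2/2) * (x-u)^2 + (d 3/6) * (x-u)^3 with hPdef
  have hP : ∀ x, taylorWithinEval g 3 (Set.Icc u v) u x = P x := by
    intro x
    rw [taylor_within_apply]
    simp [Finset.sum_range_succ, Nat.factorial, hPdef, hd]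
    ring
  have hg' : ContDiffOn ℝ ((3:ℕ) + 1) g (Set.Icc u v) := by
    exact_mod_cast hg
  set E : ℝ := M4 * (v-u)^4/6 with hE
  have htay : ∀ x ∈ Set.Icc u v, |g x - P x| ≤ E := by
    intro x hx
    have := taylor_mean_remainder_bound (n := 3) huv.le hg' hx hb
    rw [hP x] at this
    rw [← Real.norm_eq_abs]
    refine this.trans ?_
    rw [hE]
    have h1 : (x - u)^4 ≤ (v - u)^4 := by
      apply pow_le_pow_left₀ (by linarith [hx.1]) (by linarith [hx.2])
    have : (Nat.factorial 3 : ℝ) = 6 := by norm_num [Nat.factorial]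
    rw [this]
    have := mul_le_mul_of_nonneg_left h1 hMnn
    linarith
  have hPint : ∫ x in u..v, P x
      = d 0*(v-u) + d 1*(v-u)^2/2 + (d 2/2)*(v-u)^3/3 + (d 3/6)*(v-u)^4/4 :=
    cubic_integral u v (d 0) (d 1) (d 2/2) (d 3/6)
  have hPexact : ∫ x in u..v, P x = (v-u)/6 * (P u + 4 * P ((u+v)/2) + P v) := by
    rw [hPint, hPdef]; ring
  have hgint : IntervalIntegrable g MeasureTheory.volume u v := by
    apply ContinuousOn.intervalIntegrable
    rw [Set.uIcc_of_le huv.le]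
    exact hg.continuousOn
  have hPcont : Continuous P := by rw [hPdef]; continuity
  have hPint' : IntervalIntegrable P MeasureTheory.volume u v :=
    hPcont.intervalIntegrable u v
  have hsub : ∫ x in u..v, (g x - P x) = (∫ x in u..v, g x) - ∫ x in u..v, P x :=
    intervalIntegral.integral_sub hgint hPint'
  have hRint : |∫ x in u..v, (g x - P x)| ≤ E * (v - u) := by
    have hbd : ∀ x ∈ Set.uIoc u v, ‖g x - P x‖ ≤ E := by
      intro x hx
      rw [Set.uIoc_of_le huv.le] at hx
      rw [Real.norm_eq_abs]
      exact htay x ⟨hx.1.le, hx.2⟩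
    have h := intervalIntegral.norm_integral_le_of_norm_le_const hbd
    rw [Real.norm_eq_abs, abs_of_nonneg (by linarith : (0:ℝ) ≤ v - u)] at h
    exact h
  have hmid : (u+v)/2 ∈ Set.Icc u v := ⟨by linarith, by linarith⟩
  have h1 := htay u ⟨le_refl u, huv.le⟩
  have h2 := htay ((u+v)/2) hmid
  have h3 := htay v ⟨huv.le, le_refl v⟩
  have key : (v-u)/6 * (g u + 4 * g ((u+v)/2) + g v) - ∫ x in u..v, g x
      = (v-u)/6 * ((g u - P u) + 4 * (g ((u+v)/2) - P ((u+v)/2)) + (g v - P v))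
        - ∫ x in u..v, (g x - P x) := by
    rw [hsub, hPexact]; ring
  rw [key]
  have hvu : (0:ℝ) ≤ v - u := by linarith
  have habs : |(v-u)/6 * ((g u - P u) + 4 * (g ((u+v)/2) - P ((u+v)/2)) + (g v - P v))|
      ≤ (v-u)/6 * (6 * E) := by
    rw [abs_mul, abs_of_nonneg (by linarith : (0:ℝ) ≤ (v-u)/6)]
    apply mul_le_mul_of_nonneg_left _ (by linarith)
    calc |(g u - P u) + 4 * (g ((u+v)/2) - P ((u+v)/2)) + (g v - P v)|
        ≤ |g u - P u| + |4 * (g ((u+v)/2) - P ((u+v)/2))| + |g v - P v| := by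
          exact (abs_add_le _ _).trans (by gcongr; exact abs_add_le _ _)
      _ ≤ E + 4 * E + E := by
          rw [abs_mul, abs_of_nonneg (by norm_num : (0:ℝ) ≤ 4)]
          linarith [h1, h3, mul_le_mul_of_nonneg_left h2 (by norm_num : (0:ℝ) ≤ 4)]
      _ = 6 * E := by ring
  calc |(v-u)/6 * ((g u - P u) + 4 * (g ((u+v)/2) - P ((u+v)/2)) + (g v - P v))
        - ∫ x in u..v, (g x - P x)|
      ≤ (v-u)/6 * (6*E) + E * (v-u) := by
        exact (abs_sub _ _).trans (by gcongr)
    _ ≤ M4 * (v-u)^5 := by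
        rw [hE]
        nlinarith [pow_nonneg hvu 4, pow_nonneg hvu 5]

lemma icc_sum_to_range (n : ℕ) (f : ℕ → ℝ) :
    ∑ i ∈ Finset.Icc 1 n, f i = ∑ k ∈ Finset.range n, f (1 + k) := by
  rw [← Finset.Ico_add_one_right_eq_Icc, Finset.sum_Ico_eq_sum_range]
  simp
lemma cH_pos {H : ℝ} (hH : H ∈ Set.Ioo (0:ℝ) (1/2)) : 0 < cH H := by
  have h1 : 0 < Real.Gamma (H + 1/2) := Real.Gamma_pos_of_pos (by linarith [hH.1])
  have h2 : 0 < Real.Gamma (1/2 - H) := Real.Gamma_pos_of_pos (by linarith [hH.2])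
  exact div_pos one_pos (mul_pos h1 h2)

lemma rpow_integrable (c : ℝ) {r : ℝ} (hr : -1 < r) (l u : ℝ) :
    IntervalIntegrable (fun x : ℝ => c * x ^ r) volume l u :=
  (intervalIntegral.intervalIntegrable_rpow' hr).const_mul c

lemma lambdaH_Ico {H : ℝ} (hH : H ∈ Set.Ioo (0:ℝ) (1/2)) {l u : ℝ} (hl : 0 ≤ l)
    (hlu : l ≤ u) :
    ((lambdaH H) (Set.Ico l u)).toReal = ∫ x in l..u, cH H * x ^ (-H - 1/2 : ℝ) := by
  have hr : (-1 : ℝ) < -H - 1/2 := by linarith [hH.2]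
  have hcH := cH_pos hH
  have hint : IntegrableOn (fun x : ℝ => cH H * x ^ (-H - 1/2 : ℝ)) (Set.Ioc l u) volume := by
    rw [← intervalIntegrable_iff_integrableOn_Ioc_of_le hlu]
    exact rpow_integrable _ hr l u
  have hae : (Set.Ico l u ∩ Set.Ioi 0 : Set ℝ) =ᵐ[volume] (Set.Ioc l u : Set ℝ) := by
    rw [MeasureTheory.ae_eq_set]
    constructor
    · have hvol : volume ({l} : Set ℝ) = 0 := Real.volume_singleton
      apply measure_mono_null _ hvol
      · intro x hx
        simp only [Set.mem_diff, Set.mem_inter_iff, Set.mem_Ico, Set.mem_Ioi,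
          Set.mem_Ioc, not_and, not_le] at hx
        obtain ⟨⟨⟨h1, h2⟩, _⟩, h4⟩ := hx
        simp only [Set.mem_singleton_iff]
        by_contra hne
        have := h4 (lt_of_le_of_ne h1 (Ne.symm hne))
        linarith
    · have hvol : volume ({u} : Set ℝ) = 0 := Real.volume_singleton
      apply measure_mono_null _ hvol
      · intro x hx
        simp only [Set.mem_diff, Set.mem_inter_iff, Set.mem_Ico, Set.mem_Ioi,
          Set.mem_Ioc, not_and, not_lt] at hx
        obtain ⟨⟨h1, h2⟩, h3⟩ := hx
        simp only [Set.mem_singleton_iff]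
        by_contra hne
        have hx0 : 0 < x := lt_of_le_of_lt hl h1
        have := h3 ⟨h1.le, lt_of_le_of_ne h2 hne⟩
        linarith
  have h1 : (lambdaH H) (Set.Ico l u)
      = ∫⁻ x, ENNReal.ofReal (cH H * x ^ (-H - 1/2 : ℝ))
          ∂(volume.restrict (Set.Ioc l u)) := by
    rw [lambdaH, MeasureTheory.withDensity_apply _ measurableSet_Ico,
      Measure.restrict_restrict measurableSet_Ico, Measure.restrict_congr_set hae]
  have h2 : ∫⁻ x, ENNReal.ofReal (cH H * x ^ (-H - 1/2 : ℝ))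
        ∂(volume.restrict (Set.Ioc l u))
      = ENNReal.ofReal (∫ x, cH H * x ^ (-H - 1/2 : ℝ) ∂(volume.restrict (Set.Ioc l u))) := by
    rw [← MeasureTheory.ofReal_integral_eq_lintegral_ofReal hint]
    apply (ae_restrict_iff' measurableSet_Ioc).2
    apply Filter.Eventually.of_forall
    intro x hx
    have hx0 : 0 < x := lt_of_le_of_lt hl hx.1
    positivity
  have hnn : 0 ≤ ∫ x, cH H * x ^ (-H - 1/2 : ℝ) ∂(volume.restrict (Set.Ioc l u)) := by
    apply MeasureTheory.setIntegral_nonneg measurableSet_Ioc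
    intro x hx
    have hx0 : 0 < x := lt_of_le_of_lt hl hx.1
    positivity
  rw [h1, h2, ENNReal.toReal_ofReal hnn, intervalIntegral.integral_of_le hlu]




lemma exp_neg_lip {x y : ℝ} (hx : 0 ≤ x) (hy : 0 ≤ y) :
    |Real.exp (-x) - Real.exp (-y)| ≤ |x - y| := by
  wlog h : y ≤ x generalizing x y
  · rw [abs_sub_comm, abs_sub_comm x y]; exact this hy hx (le_of_not_ge h)
  have h1 : Real.exp (-x) ≤ Real.exp (-y) := Real.exp_le_exp.2 (by linarith)
  rw [abs_of_nonpos (by linarith), abs_of_nonneg (by linarith)]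
  have h2 : Real.exp (-y) - Real.exp (-x) = Real.exp (-y) * (1 - Real.exp (y - x)) := by
    rw [mul_sub, ← Real.exp_add]; ring_nf
  rw [neg_sub, h2]
  have h3 : Real.exp (-y) ≤ 1 := Real.exp_le_one_iff.2 (by linarith)
  have h4 : 0 ≤ 1 - Real.exp (y - x) := by
    have := Real.exp_le_one_iff.2 (by linarith : y - x ≤ 0); linarith
  calc Real.exp (-y) * (1 - Real.exp (y-x)) ≤ 1 * (1 - Real.exp (y-x)) :=
        mul_le_mul_of_nonneg_right h3 h4
    _ = 1 - Real.exp (y-x) := one_mul _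
    _ ≤ x - y := by nlinarith [Real.add_one_le_exp (y - x)]

lemma f_lip {M : ℝ → ℝ} {B L t T : ℝ} (hB : ∀ ρ : ℝ, 0 ≤ ρ → |M ρ| ≤ B)
    (hLip : ∀ ρ ρ' : ℝ, 0 ≤ ρ → 0 ≤ ρ' → |M ρ - M ρ'| ≤ L * |ρ - ρ'|)
    (ht : 0 ≤ t) (htT : t ≤ T) {p x : ℝ} (hp : 0 ≤ p) (hx : 0 ≤ x) :
    |M p * Real.exp (-p * t) - M x * Real.exp (-x * t)| ≤ (L + B * T) * |p - x| := by
  have hB0 : 0 ≤ B := le_trans (abs_nonneg _) (hB 0 le_rfl)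
  have hL0 : 0 ≤ L := by
    have := hLip 1 0 (by norm_num) le_rfl
    have h0 := abs_nonneg (M 1 - M 0)
    simp only [sub_zero, abs_one, mul_one] at this
    linarith
  have key : M p * Real.exp (-p*t) - M x * Real.exp (-x*t)
      = (M p - M x) * Real.exp (-p*t) + M x * (Real.exp (-p*t) - Real.exp (-x*t)) := by
    ring
  have hexp1 : |Real.exp (-p*t)| ≤ 1 := by
    rw [Real.abs_exp, Real.exp_le_one_iff]
    nlinarith
  have h1 : |(M p - M x) * Real.exp (-p*t)| ≤ L * |p - x| := by
    rw [abs_mul]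
    calc |M p - M x| * |Real.exp (-p*t)| ≤ (L * |p - x|) * 1 :=
          mul_le_mul (hLip p x hp hx) hexp1 (abs_nonneg _)
            (mul_nonneg hL0 (abs_nonneg _))
      _ = L * |p - x| := mul_one _
  have h2 : |M x * (Real.exp (-p*t) - Real.exp (-x*t))| ≤ B * (T * |p - x|) := by
    rw [abs_mul]
    have he : |Real.exp (-p*t) - Real.exp (-x*t)| ≤ T * |p - x| := by
      have h3 : |Real.exp (-(p*t)) - Real.exp (-(x*t))| ≤ |p*t - x*t| :=
        exp_neg_lip (mul_nonneg hp ht) (mul_nonneg hx ht)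
      rw [neg_mul p t, neg_mul x t]
      calc |Real.exp (-(p*t)) - Real.exp (-(x*t))| ≤ |p*t - x*t| := h3
        _ = |p - x| * t := by rw [← sub_mul, abs_mul, abs_of_nonneg ht]
        _ ≤ |p - x| * T := mul_le_mul_of_nonneg_left htT (abs_nonneg _)
        _ = T * |p - x| := mul_comm _ _
    exact mul_le_mul (hB x hx) he (abs_nonneg _) hB0
  calc |M p * Real.exp (-p*t) - M x * Real.exp (-x*t)|
      = |(M p - M x) * Real.exp (-p*t) + M x * (Real.exp (-p*t) - Real.exp (-x*t))| := by
        rw [key]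
    _ ≤ |(M p - M x) * Real.exp (-p*t)| + |M x * (Real.exp (-p*t) - Real.exp (-x*t))| :=
        abs_add_le _ _
    _ ≤ L * |p - x| + B * (T * |p - x|) := add_le_add h1 h2
    _ = (L + B*T) * |p - x| := by ring

lemma phi_integrable {M : ℝ → ℝ} (hMc : ContinuousOn M (Set.Ici 0)) {B : ℝ}
    (hMb : ∀ ρ : ℝ, 0 ≤ ρ → |M ρ| ≤ B) {t c r l u : ℝ} (ht : 0 ≤ t) (hc : 0 ≤ c)
    (hr : -1 < r) (hl : 0 ≤ l) (hlu : l ≤ u) :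
    IntervalIntegrable (fun ρ => Real.exp (-ρ * t) * M ρ * (c * ρ ^ r)) volume l u := by
  rw [intervalIntegrable_iff_integrableOn_Ioc_of_le hlu]
  have hB0 : 0 ≤ B := le_trans (abs_nonneg _) (hMb 0 le_rfl)
  have hbound : IntegrableOn (fun ρ : ℝ => B * (c * ρ ^ r)) (Set.Ioc l u) volume := by
    rw [← intervalIntegrable_iff_integrableOn_Ioc_of_le hlu]
    exact ((intervalIntegral.intervalIntegrable_rpow' hr).const_mul c).const_mul B
  apply MeasureTheory.Integrable.mono' hbound
  · apply ContinuousOn.aestronglyMeasurable _ measurableSet_Ioc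
    apply ContinuousOn.mul
    apply ContinuousOn.mul
    · exact (Real.continuous_exp.comp (continuous_id.neg.mul continuous_const)).continuousOn
    · exact hMc.mono (fun x hx => le_of_lt (lt_of_le_of_lt hl hx.1))
    · intro x hx
      exact (continuousAt_const.mul (Real.continuousAt_rpow_const x r
        (Or.inl (ne_of_gt (lt_of_le_of_lt hl hx.1))))).continuousWithinAt
  · apply (ae_restrict_iff' measurableSet_Ioc).2
    apply Filter.Eventually.of_forall
    intro x hx
    have hx0 : 0 < x := lt_of_le_of_lt hl hx.1
    have hrp : (0:ℝ) ≤ x ^ r := Real.rpow_nonneg hx0.le r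
    have habs : |c * x ^ r| = c * x ^ r := abs_of_nonneg (by positivity)
    rw [Real.norm_eq_abs, abs_mul, abs_mul, Real.abs_exp, habs]
    have hexp : Real.exp (-x * t) ≤ 1 := by
      rw [Real.exp_le_one_iff]; nlinarith
    have hMx := hMb x hx0.le
    have h1 : Real.exp (-x * t) * |M x| ≤ 1 * B :=
      mul_le_mul hexp hMx (abs_nonneg _) (by norm_num)
    calc Real.exp (-x * t) * |M x| * (c * x ^ r) ≤ (1 * B) * (c * x ^ r) :=
          mul_le_mul_of_nonneg_right h1 (by positivity)
      _ = B * (c * x ^ r) := by ring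

end Helpers

/-- Error bound for the Riemann + composite Simpson approximation of the kernel
`G^K(t) = ∫₀^K e^{-ρt} M(ρ) c_H ρ^{-H-1/2} dρ`: there is a constant `C > 0`
depending only on `H, T, β, B, L̄` such that for every `M` that is `C⁴` on `[0,∞)`
with derivatives of order `0,…,4` bounded by `B` and Lipschitz with constant `L̄`,
every `K > 1`, `n ∈ ℕ*`, every choice of points `ρpts i ∈ I_i = [(i-1)K^β/n, iK^β/n)`,
and every `t ∈ [0,T]`,
`|Ĝ^K(t) - G^K(t)| ≤ C (K^{β(3/2-H)}/n + K^{5-β(H+1/2)}/n⁴)`, where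
`Ĝ^K(t) = ∑_{i=1}^n λ_H(I_i) M(ρpts i) e^{-ρpts i · t}
  + (c_H(K-K^β)/(6n)) ∑_{i=1}^n [ρ_{i,0}^{-H-1/2}M(ρ_{i,0})e^{-ρ_{i,0}t}
    + 4 ρ_{i,1}^{-H-1/2}M(ρ_{i,1})e^{-ρ_{i,1}t} + ρ_{i,2}^{-H-1/2}M(ρ_{i,2})e^{-ρ_{i,2}t}]`
with `ρ_{i,0} = K^β + (i-1)(K-K^β)/n`, `ρ_{i,1} = K^β + (2i-1)(K-K^β)/(2n)`,
`ρ_{i,2} = K^β + i(K-K^β)/n`. -/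
theorem stmt_18 (H T β B L : ℝ) (hH : H ∈ Set.Ioo (0 : ℝ) (1 / 2)) (hT : 0 < T)
    (hβ : β ∈ Set.Ioo (0 : ℝ) 1) (hB : 0 < B) (hL : 0 < L) :
    ∃ C : ℝ, 0 < C ∧
      ∀ M : ℝ → ℝ, ContDiffOn ℝ 4 M (Set.Ici (0 : ℝ)) →
        (∀ k : ℕ, k ≤ 4 → ∀ ρ : ℝ, 0 ≤ ρ →
          |iteratedDerivWithin k M (Set.Ici (0 : ℝ)) ρ| ≤ B) →
        (∀ ρ ρ' : ℝ, 0 ≤ ρ → 0 ≤ ρ' → |M ρ - M ρ'| ≤ L * |ρ - ρ'|) →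
        ∀ K : ℝ, 1 < K → ∀ n : ℕ, 0 < n → ∀ ρpts : ℕ → ℝ,
          (∀ i : ℕ, 1 ≤ i → i ≤ n →
            ρpts i ∈ Set.Ico (((i : ℝ) - 1) * K ^ β / n) ((i : ℝ) * K ^ β / n)) →
        ∀ t ∈ Set.Icc (0 : ℝ) T,
        |(∑ i ∈ Finset.Icc 1 n,
            ((lambdaH H) (Set.Ico (((i : ℝ) - 1) * K ^ β / n) ((i : ℝ) * K ^ β / n))).toReal *
              (M (ρpts i) * Real.exp (-(ρpts i) * t)))
          + (cH H * (K - K ^ β) / (6 * n)) *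
            ∑ i ∈ Finset.Icc 1 n,
              ((K ^ β + ((i : ℝ) - 1) * (K - K ^ β) / n) ^ (-H - 1 / 2 : ℝ) *
                  M (K ^ β + ((i : ℝ) - 1) * (K - K ^ β) / n) *
                  Real.exp (-(K ^ β + ((i : ℝ) - 1) * (K - K ^ β) / n) * t)
                + 4 * ((K ^ β + (2 * (i : ℝ) - 1) * (K - K ^ β) / (2 * n)) ^ (-H - 1 / 2 : ℝ) *
                  M (K ^ β + (2 * (i : ℝ) - 1) * (K - K ^ β) / (2 * n)) *
                  Real.exp (-(K ^ β + (2 * (i : ℝ) - 1) * (K - K ^ β) / (2 * n)) * t))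
                + (K ^ β + (i : ℝ) * (K - K ^ β) / n) ^ (-H - 1 / 2 : ℝ) *
                  M (K ^ β + (i : ℝ) * (K - K ^ β) / n) *
                  Real.exp (-(K ^ β + (i : ℝ) * (K - K ^ β) / n) * t))
          - ∫ ρ in (0 : ℝ)..K, Real.exp (-ρ * t) * M ρ * (cH H * ρ ^ (-H - 1 / 2 : ℝ))| ≤
          C * (K ^ (β * (3 / 2 - H) : ℝ) / n + K ^ ((5 : ℝ) - β * (H + 1 / 2)) / (n : ℝ) ^ 4) := by
  obtain ⟨hH1, hH2⟩ := hH
  obtain ⟨hβ1, hβ2⟩ := hβ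
  have hc : 0 < cH H := cH_pos ⟨hH1, hH2⟩
  have hhalf : (0:ℝ) < 1/2 - H := by linarith
  refine ⟨(L + B*T) * cH H / (1/2 - H) + (16 * (16 * (1+T)^4 * B)) * (24 * cH H) + 1, ?_, ?_⟩
  · have h1 : 0 ≤ (L + B*T) * cH H / (1/2 - H) := by
      apply div_nonneg _ hhalf.le
      have : 0 ≤ L + B*T := by nlinarith
      positivity
    have h2 : 0 ≤ (16 * (16 * (1+T)^4 * B)) * (24 * cH H) := by positivity
    linarith
  intro M hM hMb hLip K hK n hn ρpts hρ t ht
  obtain ⟨ht0, htT⟩ := ht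
  set r : ℝ := -H - 1/2 with hrdef
  set c : ℝ := cH H with hcdef
  set a : ℝ := K ^ β with hadef
  have hK0 : (0:ℝ) < K := lt_trans one_pos hK
  have ha1 : 1 < a := by
    rw [hadef]; exact (Real.one_lt_rpow_iff_of_pos hK0).2 (Or.inl ⟨hK, hβ1⟩)
  have ha0 : 0 < a := lt_trans one_pos ha1
  have haK : a < K := by
    rw [hadef]
    calc K ^ β < K ^ (1:ℝ) := Real.rpow_lt_rpow_of_exponent_lt hK hβ2
      _ = K := Real.rpow_one K
  have hnpos : (0:ℝ) < (n:ℝ) := by exact_mod_cast hn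
  have hne : (n:ℝ) ≠ 0 := ne_of_gt hnpos
  have hr : (-1:ℝ) < r := by rw [hrdef]; linarith
  have hr0 : r ≤ 0 := by rw [hrdef]; linarith
  have hr1 : (-1:ℝ) ≤ r := hr.le
  have hB0 : (0:ℝ) ≤ B := hB.le
  have hM0 : ∀ ρ : ℝ, 0 ≤ ρ → |M ρ| ≤ B := by
    intro ρ hρ0
    have := hMb 0 (by norm_num) ρ hρ0
    simpa using this
  have hMcont : ContinuousOn M (Set.Ici 0) := hM.continuousOn
  set Φ : ℝ → ℝ := fun ρ => Real.exp (-ρ * t) * M ρ * (c * ρ ^ r) with hΦdef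
  have hphiInt : ∀ l u : ℝ, 0 ≤ l → l ≤ u → IntervalIntegrable Φ volume l u := by
    intro l u hl hlu
    rw [hΦdef]
    exact phi_integrable hMcont hM0 ht0 hc.le hr hl hlu
  have hg_int : ∀ l u : ℝ, IntervalIntegrable (fun x : ℝ => c * x ^ r) volume l u :=
    fun l u => rpow_integrable c hr l u
  -- ### Riemann part
  set pts : ℕ → ℝ := fun k => k * a / n with hptsdef
  have hpts0 : pts 0 = 0 := by simp [hptsdef]
  have hptsn : pts n = a := by rw [hptsdef]; field_simp
  have hptsnonneg : ∀ k : ℕ, 0 ≤ pts k := by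
    intro k; rw [hptsdef]; positivity
  have hptsw : ∀ k : ℕ, pts (k+1) - pts k = a / n := by
    intro k; rw [hptsdef]; push_cast; ring
  have hptsmono : ∀ k : ℕ, pts k < pts (k+1) := by
    intro k
    have hw := hptsw k
    have : 0 < a / n := by positivity
    linarith
  have htelPhi : ∑ k ∈ Finset.range n, ∫ x in pts k..pts (k+1), Φ x
      = ∫ x in (0:ℝ)..a, Φ x := by
    have h := intervalIntegral.sum_integral_adjacent_intervals (f := Φ) (μ := volume)
      (a := pts) (n := n) (fun k _ => hphiInt _ _ (hptsnonneg k) (hptsmono k).le)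
    rw [hpts0, hptsn] at h; exact h
  have htelg : ∑ k ∈ Finset.range n, ∫ x in pts k..pts (k+1), c * x ^ r
      = ∫ x in (0:ℝ)..a, c * x ^ r := by
    have h := intervalIntegral.sum_integral_adjacent_intervals
      (f := fun x : ℝ => c * x ^ r) (μ := volume) (a := pts) (n := n)
      (fun k _ => hg_int _ _)
    rw [hpts0, hptsn] at h; exact h
  have hgval : ∫ x in (0:ℝ)..a, c * x ^ r = c * (a ^ (1/2 - H) / (1/2 - H)) := by
    rw [intervalIntegral.integral_const_mul, integral_rpow (Or.inl hr), hrdef]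
    have h1 : -H - 1/2 + 1 = 1/2 - H := by ring
    rw [h1, Real.zero_rpow (ne_of_gt hhalf)]
    ring
  have hgnn : ∀ k : ℕ, 0 ≤ ∫ x in pts k..pts (k+1), c * x ^ r := by
    intro k
    apply intervalIntegral.integral_nonneg (hptsmono k).le
    intro x hx
    have hx0 : 0 ≤ x := le_trans (hptsnonneg k) hx.1
    positivity
  have hR : ∀ k ∈ Finset.range n,
      |((lambdaH H) (Set.Ico ((((1+k : ℕ) : ℝ) - 1) * a / n) (((1+k : ℕ) : ℝ) * a / n))).toReal *
          (M (ρpts (1+k)) * Real.exp (-(ρpts (1+k)) * t))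
        - ∫ x in pts k..pts (k+1), Φ x|
      ≤ ((L + B*T) * (a/n)) * ∫ x in pts k..pts (k+1), c * x ^ r := by
    intro k hk
    have hkn : k < n := Finset.mem_range.1 hk
    have hlk : (((1+k : ℕ) : ℝ) - 1) * a / n = pts k := by
      rw [hptsdef]; push_cast; ring
    have huk : (((1+k : ℕ) : ℝ)) * a / n = pts (k+1) := by
      rw [hptsdef]; push_cast; ring
    have hp := hρ (1+k) (by omega) (by omega)
    rw [hlk, huk] at hp
    have hp0 : 0 ≤ ρpts (1+k) := le_trans (hptsnonneg k) hp.1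
    have hwk : ((lambdaH H) (Set.Ico (pts k) (pts (k+1)))).toReal
        = ∫ x in pts k..pts (k+1), c * x ^ r := by
      have h := lambdaH_Ico ⟨hH1, hH2⟩ (hptsnonneg k) (hptsmono k).le
      rw [hcdef, hrdef]
      convert h using 3
    rw [hlk, huk, hwk]
    have hgint := hg_int (pts k) (pts (k+1))
    have hpint := hphiInt (pts k) (pts (k+1)) (hptsnonneg k) (hptsmono k).le
    rw [hΦdef] at hpint ⊢
    have hmulc : (∫ x in pts k..pts (k+1), c * x ^ r) * (M (ρpts (1+k)) * Real.exp (-(ρpts (1+k)) * t))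
        = ∫ x in pts k..pts (k+1), (c * x ^ r) * (M (ρpts (1+k)) * Real.exp (-(ρpts (1+k)) * t)) :=
      (intervalIntegral.integral_mul_const _ _).symm
    rw [hmulc, ← intervalIntegral.integral_sub (hgint.mul_const _) hpint]
    have hIabs : IntervalIntegrable
        (fun x => |(c * x ^ r) * (M (ρpts (1+k)) * Real.exp (-(ρpts (1+k)) * t))
          - Real.exp (-x * t) * M x * (c * x ^ r)|) volume (pts k) (pts (k+1)) := by
      have := ((hgint.mul_const (M (ρpts (1+k)) * Real.exp (-(ρpts (1+k)) * t))).sub hpint).norm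
      simpa [Real.norm_eq_abs] using this
    calc |∫ x in pts k..pts (k+1), ((c * x ^ r) * (M (ρpts (1+k)) * Real.exp (-(ρpts (1+k)) * t))
            - Real.exp (-x * t) * M x * (c * x ^ r))|
        ≤ ∫ x in pts k..pts (k+1), |(c * x ^ r) * (M (ρpts (1+k)) * Real.exp (-(ρpts (1+k)) * t))
            - Real.exp (-x * t) * M x * (c * x ^ r)| := by
          rw [← Real.norm_eq_abs]
          have h := intervalIntegral.norm_integral_le_integral_norm
            (f := fun x => (c * x ^ r) * (M (ρpts (1+k)) * Real.exp (-(ρpts (1+k)) * t))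
              - Real.exp (-x * t) * M x * (c * x ^ r)) (μ := volume) (hptsmono k).le
          simpa [Real.norm_eq_abs] using h
      _ ≤ ∫ x in pts k..pts (k+1), ((L + B*T) * (a/n)) * (c * x ^ r) := by
          apply intervalIntegral.integral_mono_on (hptsmono k).le hIabs
            (hgint.const_mul _)
          intro x hx
          have hx0 : 0 ≤ x := le_trans (hptsnonneg k) hx.1
          have hring : (c * x ^ r) * (M (ρpts (1+k)) * Real.exp (-(ρpts (1+k)) * t))
              - Real.exp (-x * t) * M x * (c * x ^ r)
              = (M (ρpts (1+k)) * Real.exp (-(ρpts (1+k)) * t)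
                  - M x * Real.exp (-x * t)) * (c * x ^ r) := by ring
          rw [hring, abs_mul, abs_of_nonneg (by positivity : (0:ℝ) ≤ c * x ^ r)]
          have hdist : |ρpts (1+k) - x| ≤ a / n := by
            have hw := hptsw k
            rw [abs_le]
            constructor
            · have := hp.1; have := hx.2; linarith
            · have := hp.2; have := hx.1; linarith
          have hf := f_lip hM0 hLip ht0 htT hp0 hx0
          have hLBT : (0:ℝ) ≤ L + B*T := by nlinarith
          have hb2 : |M (ρpts (1+k)) * Real.exp (-(ρpts (1+k)) * t) - M x * Real.exp (-x * t)|
              ≤ (L + B*T) * (a/n) :=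
            le_trans hf (mul_le_mul_of_nonneg_left hdist hLBT)
          exact mul_le_mul_of_nonneg_right hb2 (by positivity)
      _ = ((L + B*T) * (a/n)) * ∫ x in pts k..pts (k+1), c * x ^ r := by
          simp only [intervalIntegral.integral_const_mul]
  have hE1 : |(∑ i ∈ Finset.Icc 1 n,
        ((lambdaH H) (Set.Ico (((i:ℝ) - 1) * a / n) ((i:ℝ) * a / n))).toReal *
          (M (ρpts i) * Real.exp (-(ρpts i) * t)))
      - ∫ x in (0:ℝ)..a, Φ x|
      ≤ ((L + B*T) * (a/n)) * (c * (a ^ (1/2 - H) / (1/2 - H))) := by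
    rw [icc_sum_to_range n, ← htelPhi, ← Finset.sum_sub_distrib]
    refine le_trans (Finset.abs_sum_le_sum_abs _ _) ?_
    refine le_trans (Finset.sum_le_sum hR) ?_
    rw [← Finset.mul_sum, htelg, hgval]
  -- ### Simpson part
  set δ : ℝ := (K - a)/n with hδdef
  have hδpos : 0 < δ := by rw [hδdef]; apply div_pos (by linarith) hnpos
  set xpt : ℕ → ℝ := fun k => a + k * δ with hxptdef
  have hxpt0 : xpt 0 = a := by simp [hxptdef]
  have hxptn : xpt n = K := by rw [hxptdef, hδdef]; field_simp; ring
  have hxptw : ∀ k : ℕ, xpt (k+1) - xpt k = δ := by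
    intro k; simp only [hxptdef]; push_cast; ring
  have hxptmono : ∀ k : ℕ, xpt k < xpt (k+1) := by
    intro k; have := hxptw k; linarith
  have hxptge : ∀ k : ℕ, a ≤ xpt k := by
    intro k; simp only [hxptdef]
    have : 0 ≤ (k:ℝ) * δ := mul_nonneg (Nat.cast_nonneg k) hδpos.le
    linarith
  have hxptnn : ∀ k : ℕ, 0 ≤ xpt k := fun k => le_trans ha0.le (hxptge k)
  have htelPhi2 : ∑ k ∈ Finset.range n, ∫ x in xpt k..xpt (k+1), Φ x
      = ∫ x in a..K, Φ x := by
    have h := intervalIntegral.sum_integral_adjacent_intervals (f := Φ) (μ := volume)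
      (a := xpt) (n := n) (fun k _ => hphiInt _ _ (hxptnn k) (hxptmono k).le)
    rw [hxpt0, hxptn] at h; exact h
  have hsub12 : Set.Ioi (1/2:ℝ) ⊆ Set.Ici (0:ℝ) :=
    fun y hy => le_of_lt (lt_trans (by norm_num : (0:ℝ) < 1/2) hy)
  have hEc : ContDiffOn ℝ 4 (fun ρ : ℝ => Real.exp (-ρ * t)) (Set.Ioi (1/2:ℝ)) :=
    (Real.contDiff_exp.comp ((contDiff_id.neg).mul contDiff_const)).contDiffOn
  have hMc2 : ContDiffOn ℝ 4 M (Set.Ioi (1/2:ℝ)) := hM.mono hsub12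
  have hGc : ContDiffOn ℝ 4 (fun ρ : ℝ => c * ρ ^ r) (Set.Ioi (1/2:ℝ)) := by
    intro y hy
    have hy0 : y ≠ 0 := ne_of_gt (lt_trans (by norm_num) hy)
    exact (contDiffAt_const.mul (Real.contDiffAt_rpow_const_of_ne hy0)).contDiffWithinAt
  have hPhic : ContDiffOn ℝ 4 Φ (Set.Ioi (1/2:ℝ)) := by
    rw [hΦdef]; exact (hEc.mul hMc2).mul hGc
  set X : ℝ := (16 * (16 * (1+T)^4 * B)) * (24 * c) with hXdef
  have hX0 : 0 ≤ X := by rw [hXdef]; positivity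
  have hSimp : ∀ k ∈ Finset.range n,
      |δ/6 * (Φ (xpt k) + 4 * Φ ((xpt k + xpt (k+1))/2) + Φ (xpt (k+1)))
        - ∫ x in xpt k..xpt (k+1), Φ x| ≤ X * a ^ r * δ^5 := by
    intro k hk
    have hIccsub : Set.Icc (xpt k) (xpt (k+1)) ⊆ Set.Ioi (1/2:ℝ) := by
      intro y hy
      have h1 := hxptge k
      have h2 := hy.1
      simp only [Set.mem_Ioi]
      linarith [ha1]
    have hcd : ContDiffOn ℝ 4 Φ (Set.Icc (xpt k) (xpt (k+1))) := hPhic.mono hIccsub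
    have hbd : ∀ y ∈ Set.Icc (xpt k) (xpt (k+1)),
        |iteratedDerivWithin 4 Φ (Set.Icc (xpt k) (xpt (k+1))) y| ≤ X * a ^ r := by
      intro y hy
      have hy1 : 1 ≤ y := le_trans (le_trans ha1.le (hxptge k)) hy.1
      rw [eqOn_iterDW_subset hIccsub (uniqueDiffOn_Icc (hxptmono k))
        isOpen_Ioi.uniqueDiffOn (n := 4) (by exact_mod_cast hPhic) (le_refl 4) hy]
      have h2 := phi_fourth_bound (M := M) (B := B) (T := T) (t := t) (c := c) (r := r)
        hM hMb ht0 htT hc.le hr1 hr0 hy1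
      rw [← hΦdef] at h2
      refine h2.trans ?_
      rw [hXdef]
      have hyr : y ^ r ≤ a ^ r :=
        Real.rpow_le_rpow_of_nonpos ha0 (le_trans (hxptge k) hy.1) hr0
      calc 16 * (16 * (1 + T) ^ 4 * B) * (24 * c) * y ^ r
          ≤ 16 * (16 * (1 + T) ^ 4 * B) * (24 * c) * a ^ r := by
            apply mul_le_mul_of_nonneg_left hyr (by positivity)
        _ = 16 * (16 * (1 + T) ^ 4 * B) * (24 * c) * a ^ r := rfl
    have hs := simpson_single (hxptmono k) hcd hbd
    rw [hxptw k] at hs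
    exact hs
  have hconv2 : (c * (K - a) / (6 * n)) *
      (∑ i ∈ Finset.Icc 1 n, ((a + ((i:ℝ) - 1) * (K - a) / n) ^ r *
          M (a + ((i:ℝ) - 1) * (K - a) / n) *
          Real.exp (-(a + ((i:ℝ) - 1) * (K - a) / n) * t)
        + 4 * ((a + (2*(i:ℝ) - 1) * (K - a) / (2*n)) ^ r *
          M (a + (2*(i:ℝ) - 1) * (K - a) / (2*n)) *
          Real.exp (-(a + (2*(i:ℝ) - 1) * (K - a) / (2*n)) * t))
        + (a + (i:ℝ) * (K - a) / n) ^ r *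
          M (a + (i:ℝ) * (K - a) / n) *
          Real.exp (-(a + (i:ℝ) * (K - a) / n) * t)))
      = ∑ k ∈ Finset.range n,
          δ/6 * (Φ (xpt k) + 4 * Φ ((xpt k + xpt (k+1))/2) + Φ (xpt (k+1))) := by
    rw [icc_sum_to_range n, Finset.mul_sum]
    apply Finset.sum_congr rfl
    intro k hk
    have h0 : a + (((1+k:ℕ):ℝ) - 1) * (K - a) / n = xpt k := by
      simp only [hxptdef, hδdef]; push_cast; ring
    have h1 : a + (2*((1+k:ℕ):ℝ) - 1) * (K - a) / (2*n) = (xpt k + xpt (k+1))/2 := by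
      simp only [hxptdef, hδdef]; push_cast; ring
    have h2 : a + ((1+k:ℕ):ℝ) * (K - a) / n = xpt (k+1) := by
      simp only [hxptdef, hδdef]; push_cast; ring
    rw [h0, h1, h2]
    simp only [hΦdef, hδdef]
    ring
  have hE2 : |(c * (K - a) / (6 * n)) *
      (∑ i ∈ Finset.Icc 1 n, ((a + ((i:ℝ) - 1) * (K - a) / n) ^ r *
          M (a + ((i:ℝ) - 1) * (K - a) / n) *
          Real.exp (-(a + ((i:ℝ) - 1) * (K - a) / n) * t)
        + 4 * ((a + (2*(i:ℝ) - 1) * (K - a) / (2*n)) ^ r *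
          M (a + (2*(i:ℝ) - 1) * (K - a) / (2*n)) *
          Real.exp (-(a + (2*(i:ℝ) - 1) * (K - a) / (2*n)) * t))
        + (a + (i:ℝ) * (K - a) / n) ^ r *
          M (a + (i:ℝ) * (K - a) / n) *
          Real.exp (-(a + (i:ℝ) * (K - a) / n) * t)))
      - ∫ x in a..K, Φ x| ≤ n * (X * a ^ r * δ^5) := by
    rw [hconv2, ← htelPhi2, ← Finset.sum_sub_distrib]
    refine le_trans (Finset.abs_sum_le_sum_abs _ _) ?_
    refine le_trans (Finset.sum_le_sum hSimp) ?_
    rw [Finset.sum_const, Finset.card_range, nsmul_eq_mul]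
  -- ### assembly
  have hsplit : ∫ ρ in (0:ℝ)..K, Φ ρ = (∫ x in (0:ℝ)..a, Φ x) + ∫ x in a..K, Φ x :=
    (intervalIntegral.integral_add_adjacent_intervals (hphiInt 0 a le_rfl ha0.le)
      (hphiInt a K ha0.le haK.le)).symm
  rw [hsplit]
  have hre : ∀ p q i1 i2 : ℝ, |p + q - (i1 + i2)| ≤ |p - i1| + |q - i2| := by
    intro p q i1 i2
    have h : p + q - (i1 + i2) = (p - i1) + (q - i2) := by ring
    rw [h]; exact abs_add_le _ _
  refine le_trans (hre _ _ _ _) ?_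
  refine le_trans (add_le_add hE1 hE2) ?_
  -- ### numerics
  have hE1eq : (L + B*T) * (a/n) * (c * (a ^ (1/2 - H) / (1/2 - H)))
      = ((L + B*T) * c / (1/2 - H)) * (K ^ (β * (3/2 - H)) / n) := by
    have hKpow : K ^ (β * (3/2 - H)) = a * a ^ (1/2 - H) := by
      rw [Real.rpow_mul hK0.le, ← hadef]
      have he : (3:ℝ)/2 - H = 1 + (1/2 - H) := by ring
      rw [he, Real.rpow_add ha0, Real.rpow_one]
    rw [hKpow]
    have h2ne : (1:ℝ)/2 - H ≠ 0 := ne_of_gt hhalf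
    field_simp
  have hE2le : (n:ℝ) * (X * a ^ r * δ^5)
      ≤ X * (K ^ ((5:ℝ) - β * (H + 1/2)) / (n:ℝ)^4) := by
    have hδ5 : δ^5 = (K - a)^5 / (n:ℝ)^5 := by rw [hδdef, div_pow]
    have h1 : (n:ℝ) * (X * a ^ r * ((K - a)^5/(n:ℝ)^5))
        = X * (a ^ r * (K - a)^5) / (n:ℝ)^4 := by
      field_simp
    rw [hδ5, h1]
    have heq : a ^ r * (K:ℝ)^(5:ℕ) = K ^ ((5:ℝ) - β * (H + 1/2)) := by
      rw [hadef, ← Real.rpow_mul hK0.le, ← Real.rpow_natCast K 5, ← Real.rpow_add hK0]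
      congr 1
      rw [hrdef]; push_cast; ring
    have hle1 : a ^ r * (K - a)^5 ≤ K ^ ((5:ℝ) - β * (H + 1/2)) := by
      calc a ^ r * (K - a)^5 ≤ a ^ r * K^5 := by
            apply mul_le_mul_of_nonneg_left _ (Real.rpow_nonneg ha0.le r)
            exact pow_le_pow_left₀ (by linarith) (by linarith) 5
        _ = K ^ ((5:ℝ) - β * (H + 1/2)) := heq
    calc X * (a ^ r * (K - a)^5) / (n:ℝ)^4
        ≤ X * (K ^ ((5:ℝ) - β * (H + 1/2))) / (n:ℝ)^4 := by
          apply div_le_div_of_nonneg_right _ (by positivity)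
          exact mul_le_mul_of_nonneg_left hle1 hX0
      _ = X * (K ^ ((5:ℝ) - β * (H + 1/2)) / (n:ℝ)^4) := by ring
  refine le_trans (add_le_add (le_of_eq hE1eq) hE2le) ?_
  have hT1 : 0 ≤ K ^ (β * (3/2 - H)) / (n:ℝ) :=
    div_nonneg (Real.rpow_nonneg hK0.le _) hnpos.le
  have hT2 : 0 ≤ K ^ ((5:ℝ) - β * (H + 1/2)) / (n:ℝ)^4 :=
    div_nonneg (Real.rpow_nonneg hK0.le _) (by positivity)
  have hC1 : 0 ≤ (L + B*T) * c / (1/2 - H) :=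
    div_nonneg (mul_nonneg (by nlinarith) hc.le) hhalf.le
  nlinarith [mul_nonneg hC1 hT2, mul_nonneg hX0 hT1, hT1, hT2]
end
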